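/- arXiv:2111.07394 — 8 statements merged into one kernel-verified Lean document; each statement's English description precedes it below -/
import Mathlib

section
/- Let s ≥ 1 be an integer and let 1 ≤ K ≤ n−1 with λ_{K+1} > 0. Then with probability at least 1 − exp(−K), the PCR estimator satisfies ‖f̂ − f0‖_n² ≤ ⟨L^s f0, f0⟩_n / λ_{K+1}^s + 5K/n. -/
open Finset Matrix MeasureTheory ProbabilityTheory

/-- Empirical inner product on ℝⁿ: `⟨u,v⟩ₙ = (1/n) ∑ᵢ uᵢ vᵢ`. -/
noncomputable def empInner (n : ℕ) (u v : Fin n → ℝ) : ℝ :=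
  (1 / (n : ℝ)) * ∑ i, u i * v i

open Real
open scoped ENNReal NNReal

lemma lintegral_pi_prod : ∀ (n : ℕ) (μ : Fin n → Measure ℝ), (∀ i, SigmaFinite (μ i)) →
    ∀ (f : Fin n → ℝ → ℝ≥0∞), (∀ i, Measurable (f i)) →
    ∫⁻ x, ∏ i, f i (x i) ∂Measure.pi μ = ∏ i, ∫⁻ y, f i y ∂μ i := by
  intro n
  induction n with
  | zero => intro μ _ f _; simp [Measure.pi_of_empty]
  | succ n ih =>
    intro μ hσ f hf
    haveI := hσ
    have hprodmeas : Measurable fun x : Fin n → ℝ => ∏ i : Fin n, f i.succ (x i) :=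
      Finset.measurable_prod _ fun i _ => (hf i.succ).comp (measurable_pi_apply i)
    calc ∫⁻ x, ∏ i, f i (x i) ∂Measure.pi μ
        = ∫⁻ p : ℝ × (Fin n → ℝ), f 0 p.1 * ∏ i : Fin n, f i.succ (p.2 i)
            ∂((μ 0).prod (Measure.pi fun i => μ (Fin.succAbove 0 i))) := by
          rw [MeasurePreserving.lintegral_map_equiv _ _
            (MeasurePreserving.symm _ (measurePreserving_piFinSuccAbove μ 0))]
          congr 1
          ext p
          rw [Fin.prod_univ_succ]
          simp [MeasurableEquiv.piFinSuccAbove_symm_apply, Fin.insertNthEquiv,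
            Fin.insertNth_zero, Fin.zero_succAbove]
      _ = (∫⁻ y, f 0 y ∂μ 0) * ∫⁻ x, ∏ i : Fin n, f i.succ (x i)
            ∂(Measure.pi fun i => μ (Fin.succAbove 0 i)) := by
          rw [lintegral_prod]
          · simp_rw [lintegral_const_mul _ hprodmeas]
            rw [lintegral_mul_const _ (hf 0)]
          · exact (((hf 0).comp measurable_fst).mul
              (hprodmeas.comp measurable_snd)).aemeasurable
      _ = ∏ i, ∫⁻ y, f i y ∂μ i := by
          rw [ih _ (fun i => inferInstance) _ (fun i => hf i.succ), Fin.prod_univ_succ]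
          rfl

lemma pi_gauss_eq (n : ℕ) :
    Measure.pi (fun _ : Fin n => gaussianReal 0 1) =
      volume.withDensity (fun x : Fin n → ℝ => ∏ i, gaussianPDF 0 1 (x i)) := by
  refine (Measure.pi_eq (μ := fun _ : Fin n => gaussianReal 0 1) fun s hs => ?_)
  rw [withDensity_apply _ (MeasurableSet.univ_pi hs), ← lintegral_indicator (MeasurableSet.univ_pi hs) (fun x : Fin n → ℝ => ∏ i, gaussianPDF 0 1 (x i))]
  have hind : ∀ x : Fin n → ℝ, (Set.pi Set.univ s).indicator
      (fun x : Fin n → ℝ => ∏ i, gaussianPDF 0 1 (x i)) x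
      = ∏ i, (s i).indicator (gaussianPDF 0 1) (x i) := by
    intro x
    by_cases hx : x ∈ Set.pi Set.univ s
    · rw [Set.indicator_of_mem hx]
      exact Finset.prod_congr rfl fun i _ =>
        (Set.indicator_of_mem (hx i (Set.mem_univ i)) _).symm
    · rw [Set.indicator_of_notMem hx]
      rw [Set.mem_univ_pi, not_forall] at hx
      obtain ⟨i, hi⟩ := hx
      exact (Finset.prod_eq_zero (Finset.mem_univ i)
        (by rw [Set.indicator_of_notMem hi])).symm
  simp_rw [hind]
  rw [volume_pi, lintegral_pi_prod n _ (fun _ => inferInstance) _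
    (fun i => (measurable_gaussianPDF 0 1).indicator (hs i))]
  refine Finset.prod_congr rfl fun i _ => ?_
  rw [lintegral_indicator (hs i), gaussianReal_apply 0 one_ne_zero]

lemma key1d {t : ℝ} (ht2 : t < 1/2) :
    ∫⁻ y : ℝ, ENNReal.ofReal (Real.exp (t*y^2) * gaussianPDFReal 0 1 y) =
      ENNReal.ofReal (Real.sqrt (1/(1-2*t))) := by
  set b : ℝ := 1/2 - t with hb_def
  have hb : 0 < b := by simp [hb_def]; linarith
  have hpt : ∀ y : ℝ, Real.exp (t*y^2) * gaussianPDFReal 0 1 y =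
      (Real.sqrt (2*Real.pi))⁻¹ * Real.exp (-b * y^2) := by
    intro y
    rw [gaussianPDFReal]
    push_cast
    rw [mul_one, sub_zero, mul_comm]
    rw [mul_assoc, ← Real.exp_add]
    congr 1
    simp only [hb_def]; ring_nf
  simp_rw [hpt]
  rw [← ofReal_integral_eq_lintegral_ofReal
    (((integrable_exp_neg_mul_sq hb).const_mul _))
    (Filter.Eventually.of_forall fun y => by positivity)]
  congr 1
  rw [integral_const_mul, integral_gaussian]
  rw [← Real.sqrt_inv, ← Real.sqrt_mul (by positivity)]
  congr 1
  have hπ := Real.pi_pos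
  have h2b : 1 - 2*t = 2*b := by rw [hb_def]; ring
  rw [h2b]
  field_simp

lemma sum_mul_ortho {n : ℕ} (B : Fin n → Fin n → ℝ)
    (h : ∀ i j, ∑ k, B k i * B k j = if i = j then (1:ℝ) else 0) (x y : Fin n → ℝ) :
    ∑ k, (∑ i, B k i * x i) * (∑ j, B k j * y j) = ∑ i, x i * y i := by
  calc ∑ k, (∑ i, B k i * x i) * (∑ j, B k j * y j)
      = ∑ k, ∑ i, ∑ j, (B k i * x i) * (B k j * y j) := by
        refine Finset.sum_congr rfl fun k _ => ?_
        rw [Finset.sum_mul_sum]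
    _ = ∑ i, ∑ j, (x i * y j) * ∑ k, B k i * B k j := by
        rw [Finset.sum_comm]
        refine Finset.sum_congr rfl fun i _ => ?_
        rw [Finset.sum_comm]
        refine Finset.sum_congr rfl fun j _ => ?_
        rw [Finset.mul_sum]
        exact Finset.sum_congr rfl fun k _ => by ring
    _ = ∑ i, x i * y i := by
        simp_rw [h, mul_ite, mul_one, mul_zero]
        simp

lemma sum_sq_mulVec {n : ℕ} (A : Matrix (Fin n) (Fin n) ℝ) (hA : Aᵀ * A = 1) (x : Fin n → ℝ) :
    ∑ k, (A.mulVec x k)^2 = ∑ i, (x i)^2 := by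
  have h : ∀ i j, ∑ k, A k i * A k j = if i = j then (1:ℝ) else 0 := by
    intro i j
    have := congrArg (fun M => M i j) hA
    simpa [Matrix.mul_apply, Matrix.transpose_apply, Matrix.one_apply] using this
  have := sum_mul_ortho (fun k i => A k i) h x x
  simp_rw [Matrix.mulVec, dotProduct, pow_two]
  rw [this]

lemma measurable_mulVec {n : ℕ} (A : Matrix (Fin n) (Fin n) ℝ) :
    Measurable (fun x : Fin n → ℝ => A.mulVec x) := by
  apply measurable_pi_lambda
  intro k
  simp only [Matrix.mulVec, dotProduct]
  exact Finset.measurable_sum _ fun i _ => (measurable_pi_apply i).const_mul _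

lemma lintegral_exp_quad (n K : ℕ) (A : Matrix (Fin n) (Fin n) ℝ)
    (hA : A * Aᵀ = 1) (hA' : Aᵀ * A = 1) {t : ℝ} (ht : 0 ≤ t) (ht2 : t < 1/2) :
    ∫⁻ x : Fin n → ℝ, ENNReal.ofReal (Real.exp (t * ∑ k ∈ univ.filter (fun k : Fin n => (k:ℕ) < K),
        (A.mulVec x k)^2)) ∂(Measure.pi fun _ => gaussianReal 0 1)
      = ENNReal.ofReal (Real.sqrt (1/(1-2*t)) ^ (univ.filter (fun k : Fin n => (k:ℕ) < K)).card) := by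
  classical
  set c : ℝ := Real.sqrt (1/(1-2*t)) with hc_def
  have hc0 : 0 ≤ c := Real.sqrt_nonneg _
  set ψ : Fin n → ℝ → ℝ := fun k y =>
    (if (k:ℕ) < K then Real.exp (t*y^2) else 1) * gaussianPDFReal 0 1 y with hψ_def
  have hψ_nonneg : ∀ k y, 0 ≤ ψ k y := by
    intro k y
    apply mul_nonneg
    · split <;> positivity
    · exact gaussianPDFReal_nonneg 0 1 y
  set φ : Fin n → ℝ → ℝ≥0∞ := fun k y => ENNReal.ofReal (ψ k y) with hφ_def
  have hψmeas : ∀ k, Measurable (ψ k) := by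
    intro k
    apply Measurable.mul _ (measurable_gaussianPDFReal 0 1)
    split
    · exact (measurable_id.pow_const 2 |>.const_mul t).exp
    · exact measurable_const
  have hφmeas : ∀ k, Measurable (φ k) := fun k => ENNReal.measurable_ofReal.comp (hψmeas k)
  have hFmeas : Measurable (fun x : Fin n → ℝ =>
      ENNReal.ofReal (Real.exp (t * ∑ k ∈ univ.filter (fun k : Fin n => (k:ℕ) < K),
        (A.mulVec x k)^2))) := by
    apply ENNReal.measurable_ofReal.comp
    apply Real.measurable_exp.comp
    apply Measurable.const_mul
    exact Finset.measurable_sum _ fun k _ => ((measurable_mulVec A).eval).pow_const 2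
  -- key pointwise identity
  have hpoint : ∀ x : Fin n → ℝ,
      (∏ i, gaussianPDF 0 1 (x i)) * ENNReal.ofReal (Real.exp (t * ∑ k ∈ univ.filter
        (fun k : Fin n => (k:ℕ) < K), (A.mulVec x k)^2))
      = ∏ k, φ k (A.mulVec x k) := by
    intro x
    have hreal : Real.exp (t * ∑ k ∈ univ.filter (fun k : Fin n => (k:ℕ) < K), (A.mulVec x k)^2)
        = ∏ k : Fin n, (if (k:ℕ) < K then Real.exp (t*(A.mulVec x k)^2) else 1) := by
      rw [Finset.mul_sum, Real.exp_sum]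
      exact Finset.prod_filter (fun k : Fin n => (k:ℕ) < K)
        (fun k => Real.exp (t*(A.mulVec x k)^2))
    have hpdf : ∏ i, gaussianPDFReal 0 1 (x i) = ∏ k, gaussianPDFReal 0 1 (A.mulVec x k) := by
      simp_rw [gaussianPDFReal]
      rw [Finset.prod_mul_distrib, Finset.prod_mul_distrib]
      congr 1
      rw [← Real.exp_sum, ← Real.exp_sum]
      congr 1
      have := sum_sq_mulVec A hA' x
      push_cast
      simp_rw [sub_zero, mul_one, neg_div]
      rw [Finset.sum_neg_distrib, Finset.sum_neg_distrib, ← Finset.sum_div, ← Finset.sum_div,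
        this]
    simp_rw [hφ_def, hψ_def]
    rw [← ENNReal.ofReal_prod_of_nonneg (fun k _ => hψ_nonneg k _)]
    simp_rw [gaussianPDF]
    rw [← ENNReal.ofReal_prod_of_nonneg (fun i _ => gaussianPDFReal_nonneg 0 1 _),
      ← ENNReal.ofReal_mul (Finset.prod_nonneg fun i _ => gaussianPDFReal_nonneg 0 1 _)]
    congr 1
    rw [Finset.prod_mul_distrib, hreal, hpdf]
    ring
  have hρmeas : Measurable (fun x : Fin n → ℝ => ∏ i, gaussianPDF 0 1 (x i)) := by
    exact Finset.measurable_prod _ fun i _ =>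
      (measurable_gaussianPDF 0 1).comp (measurable_pi_apply i)
  rw [pi_gauss_eq, lintegral_withDensity_eq_lintegral_mul _ hρmeas hFmeas]
  set H : (Fin n → ℝ) → ℝ≥0∞ := fun y => ∏ k, φ k (y k) with hH_def
  have hH : Measurable H :=
    Finset.measurable_prod _ fun k _ => (hφmeas k).comp (measurable_pi_apply k)
  have h3 : A.det * A.det = 1 := by
    have := congrArg Matrix.det hA
    rwa [Matrix.det_mul, Matrix.det_transpose, Matrix.det_one] at this
  have habs : |A.det| = 1 := by
    rcases mul_self_eq_one_iff.mp h3 with h | h <;> rw [h] <;> norm_num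
  have hdet0 : LinearMap.det (Matrix.toLin' A) ≠ 0 := by
    rw [LinearMap.det_toLin']
    intro h
    rw [h] at habs
    norm_num at habs
  have hvol : Measure.map (Matrix.toLin' A) volume = volume := by
    rw [Real.map_linearMap_volume_pi_eq_smul_volume_pi hdet0, LinearMap.det_toLin', abs_inv, habs]
    norm_num
  have hcoe : (⇑(Matrix.toLin' A) : (Fin n → ℝ) → Fin n → ℝ) = fun x => A.mulVec x :=
    funext fun x => Matrix.toLin'_apply A x
  have hTmeas : Measurable (⇑(Matrix.toLin' A)) := by
    rw [hcoe]; exact measurable_mulVec A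
  calc ∫⁻ x, ((fun x : Fin n → ℝ => ∏ i, gaussianPDF 0 1 (x i)) * fun x =>
        ENNReal.ofReal (Real.exp (t * ∑ k ∈ univ.filter (fun k : Fin n => (k:ℕ) < K),
          (A.mulVec x k)^2))) x
      = ∫⁻ x, H (Matrix.toLin' A x) := by
        congr 1
        ext x
        rw [hcoe]
        exact hpoint x
    _ = ∫⁻ y, H y ∂(Measure.map (Matrix.toLin' A) volume) := (lintegral_map hH hTmeas).symm
    _ = ∫⁻ y, H y := by rw [hvol]
    _ = ∏ k, ∫⁻ y, φ k y := by
        rw [hH_def, volume_pi, lintegral_pi_prod n _ (fun _ => inferInstance) _ hφmeas]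
    _ = ENNReal.ofReal (c ^ (univ.filter (fun k : Fin n => (k:ℕ) < K)).card) := by
        have hval : ∀ k : Fin n, ∫⁻ y, φ k y = if (k:ℕ) < K then ENNReal.ofReal c else 1 := by
          intro k
          simp_rw [hφ_def, hψ_def]
          split
          · exact key1d ht2
          · simp_rw [one_mul]
            have := lintegral_gaussianPDF_eq_one 0 (one_ne_zero (α := ℝ≥0))
            simp_rw [gaussianPDF] at this
            exact this
        simp_rw [hval]
        rw [← Finset.prod_filter, Finset.prod_const, ← ENNReal.ofReal_pow hc0]

lemma emp_inner_expand (n : ℕ) (hn : (0:ℝ) < n) (v : Fin n → Fin n → ℝ)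
    (horth : ∀ k l, empInner n (v k) (v l) = if k = l then 1 else 0)
    (c d : Fin n → ℝ) :
    empInner n (fun i => ∑ k, c k * v k i) (fun i => ∑ k, d k * v k i) = ∑ k, c k * d k := by
  unfold empInner
  calc (1/(n:ℝ)) * ∑ i, (∑ k, c k * v k i) * (∑ l, d l * v l i)
      = (1/(n:ℝ)) * ∑ i, ∑ k, ∑ l, (c k * v k i) * (d l * v l i) := by
        congr 1
        refine Finset.sum_congr rfl fun i _ => ?_
        rw [Finset.sum_mul_sum]
    _ = ∑ k, ∑ l, (c k * d l) * ((1/(n:ℝ)) * ∑ i, v k i * v l i) := by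
        simp_rw [Finset.mul_sum]
        rw [Finset.sum_comm]
        refine Finset.sum_congr rfl fun k _ => ?_
        rw [Finset.sum_comm]
        refine Finset.sum_congr rfl fun l _ => ?_
        refine Finset.sum_congr rfl fun i _ => ?_
        ring
    _ = ∑ k, c k * d k := by
        have : ∀ k l : Fin n, (1/(n:ℝ)) * ∑ i, v k i * v l i = if k = l then 1 else 0 :=
          fun k l => horth k l
        simp_rw [this, mul_ite, mul_one, mul_zero]
        simp

lemma emp_dual (n : ℕ) (hn : (0:ℝ) < n) (v : Fin n → Fin n → ℝ)
    (horth : ∀ k l, empInner n (v k) (v l) = if k = l then 1 else 0) (i j : Fin n) :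
    ∑ k, v k i * v k j = if i = j then (n:ℝ) else 0 := by
  classical
  set V : Matrix (Fin n) (Fin n) ℝ := Matrix.of fun k i => v k i with hV
  have h1 : V * ((1/(n:ℝ)) • Vᵀ) = 1 := by
    ext k l
    simp only [Matrix.mul_apply, Matrix.smul_apply, Matrix.transpose_apply, Matrix.one_apply,
      smul_eq_mul, hV, Matrix.of_apply]
    have := horth k l
    unfold empInner at this
    rw [Finset.mul_sum] at this
    rw [← this]
    exact Finset.sum_congr rfl fun m _ => by ring
  have h2 : ((1/(n:ℝ)) • Vᵀ) * V = 1 := mul_eq_one_comm.mp h1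
  have h3 := congrArg (fun M => M i j) h2
  simp only [Matrix.mul_apply, Matrix.smul_apply, Matrix.transpose_apply, Matrix.one_apply,
    smul_eq_mul, hV, Matrix.of_apply] at h3
  have h4 : (1/(n:ℝ)) * ∑ k, v k i * v k j = if i = j then 1 else 0 := by
    rw [← h3, Finset.mul_sum]
    exact Finset.sum_congr rfl fun k _ => by ring
  have hne : (n:ℝ) ≠ 0 := ne_of_gt hn
  by_cases h : i = j
  · subst h
    rw [if_pos rfl] at h4
    rw [if_pos rfl]
    field_simp at h4
    simpa [sq] using h4
  · rw [if_neg h] at h4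
    rw [if_neg h]
    have : ∑ k, v k i * v k j = (n:ℝ) * ((1/(n:ℝ)) * ∑ k, v k i * v k j) := by
      field_simp
    rw [this, h4, mul_zero]

lemma emp_expansion (n : ℕ) (hn : (0:ℝ) < n) (v : Fin n → Fin n → ℝ)
    (horth : ∀ k l, empInner n (v k) (v l) = if k = l then 1 else 0)
    (u : Fin n → ℝ) (i : Fin n) : ∑ k, empInner n u (v k) * v k i = u i := by
  have hne : (n:ℝ) ≠ 0 := ne_of_gt hn
  unfold empInner
  calc ∑ k, (1/(n:ℝ) * ∑ j, u j * v k j) * v k i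
      = (1/(n:ℝ)) * ∑ j, u j * ∑ k, v k j * v k i := by
        simp_rw [Finset.mul_sum, Finset.sum_mul]
        rw [Finset.sum_comm]
        refine Finset.sum_congr rfl fun k _ => ?_
        refine Finset.sum_congr rfl fun j _ => ?_
        ring
    _ = u i := by
        have : ∀ j, ∑ k, v k j * v k i = if j = i then (n:ℝ) else 0 :=
          fun j => emp_dual n hn v horth j i
        simp_rw [this, mul_ite, mul_zero]
        rw [Finset.sum_ite_eq' Finset.univ i (fun j => u j * (n:ℝ))]
        simp only [Finset.mem_univ, if_true]
        field_simp

lemma map_wvec_eq_pi {n : ℕ} {Ω : Type*} [MeasurableSpace Ω] (P : Measure Ω)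
    [IsProbabilityMeasure P] (w : Fin n → Ω → ℝ) (hwmeas : ∀ i, Measurable (w i))
    (hwindep : iIndepFun w P)
    (hwlaw : ∀ i, P.map (w i) = gaussianReal 0 1) :
    P.map (fun ω i => w i ω) = Measure.pi (fun _ : Fin n => gaussianReal 0 1) := by
  refine (Measure.pi_eq (μ := fun _ : Fin n => gaussianReal 0 1) fun s hs => ?_).symm
  rw [Measure.map_apply (measurable_pi_lambda _ hwmeas) (MeasurableSet.univ_pi hs)]
  have hpre : (fun ω i => w i ω) ⁻¹' (Set.pi Set.univ s) = ⋂ i, w i ⁻¹' (s i) := by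
    ext ω
    simp [Set.mem_pi]
  rw [hpre]
  have h := hwindep.measure_inter_preimage_eq_mul (S := Finset.univ) (sets := s)
    (fun i _ => hs i)
  simp only [Finset.mem_univ, Set.iInter_true, Set.iInter_iInter_eq_left] at h
  rw [h]
  exact Finset.prod_congr rfl fun i _ => by
    rw [← hwlaw i, Measure.map_apply (hwmeas i) (hs i)]

lemma card_filter_lt_fin (n K : ℕ) (h : K ≤ n) :
    (Finset.univ.filter fun k : Fin n => (k:ℕ) < K).card = K := by
  rw [Finset.card_filter]
  rw [Fin.sum_univ_eq_sum_range (fun i => if i < K then 1 else 0)]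
  rw [← Finset.card_filter]
  have : (Finset.range n).filter (fun i => i < K) = Finset.range K := by
    ext i
    simp only [Finset.mem_filter, Finset.mem_range]
    omega
  rw [this, Finset.card_range]

lemma pow_mulVec_eig {n : ℕ} (L : Matrix (Fin n) (Fin n) ℝ) (lam : ℝ) (x : Fin n → ℝ)
    (h : L.mulVec x = lam • x) (s : ℕ) : (L ^ s).mulVec x = (lam ^ s) • x := by
  induction s with
  | zero => simp [Matrix.one_mulVec]
  | succ m ih =>
    rw [pow_succ', ← Matrix.mulVec_mulVec, ih, Matrix.mulVec_smul, h, smul_smul, ← pow_succ]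

/-- Let `L` be symmetric PSD with eigenvalues `0 ≤ λ₁ ≤ ⋯ ≤ λₙ` and eigenvectors
`v₁,…,vₙ` orthonormal in the empirical inner product.  Let `Y = f₀ + w` with `w₁,…,wₙ` i.i.d.
standard Gaussians, and let `f̂ = ∑_{k=1}^K ⟨Y,v_k⟩ₙ v_k` be the PCR estimator.  Then for any
integer `s ≥ 1` and `1 ≤ K ≤ n-1` with `λ_{K+1} > 0` (0-based: index `K`), with probability at
least `1 - exp(-K)`,
`‖f̂ - f₀‖ₙ² ≤ ⟨Lˢ f₀, f₀⟩ₙ / λ_{K+1}ˢ + 5K/n`. -/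
theorem pcr_estimation_bound
    (n : ℕ) (hn : 1 ≤ n)
    (L : Matrix (Fin n) (Fin n) ℝ) (hsymm : L.IsSymm)
    (lam : Fin n → ℝ) (v : Fin n → Fin n → ℝ)
    (hnonneg : ∀ k, 0 ≤ lam k) (hmono : Monotone lam)
    (heig : ∀ k, L.mulVec (v k) = lam k • v k)
    (horth : ∀ k l, empInner n (v k) (v l) = if k = l then 1 else 0)
    (Ω : Type*) [MeasurableSpace Ω] (P : Measure Ω) [IsProbabilityMeasure P]
    (w : Fin n → Ω → ℝ)
    (hwmeas : ∀ i, Measurable (w i))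
    (hwindep : iIndepFun w P)
    (hwlaw : ∀ i, P.map (w i) = gaussianReal 0 1)
    (f0 : Fin n → ℝ)
    (Y : Ω → Fin n → ℝ) (hY : ∀ ω i, Y ω i = f0 i + w i ω)
    (s : ℕ) (hs : 1 ≤ s)
    (K : ℕ) (hK1 : 1 ≤ K) (hKn : K ≤ n - 1)
    (hlamK : 0 < lam ⟨K, by omega⟩)
    (fhat : Ω → Fin n → ℝ)
    (hfhat : ∀ ω, fhat ω =
      ∑ k ∈ univ.filter fun k : Fin n => (k : ℕ) < K, empInner n (Y ω) (v k) • v k) :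
    1 - Real.exp (-(K : ℝ)) ≤
      (P {ω | empInner n (fun i => fhat ω i - f0 i) (fun i => fhat ω i - f0 i)
          ≤ empInner n ((L ^ s).mulVec f0) f0 / lam ⟨K, by omega⟩ ^ s
            + 5 * K / n}).toReal := by
  classical
  have hn0 : (0:ℝ) < n := by exact_mod_cast hn
  have hnne : (n:ℝ) ≠ 0 := ne_of_gt hn0
  have hKn' : K < n := by omega
  set sn : ℝ := Real.sqrt n with hsn
  have hsnpos : 0 < sn := Real.sqrt_pos.mpr hn0
  have hsnsq : sn * sn = n := Real.mul_self_sqrt (le_of_lt hn0)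
  set A : Matrix (Fin n) (Fin n) ℝ := Matrix.of (fun k i => v k i / sn) with hA_def
  have hAentry : ∀ k i, A k i = v k i / sn := fun k i => rfl
  have hA : A * Aᵀ = 1 := by
    ext k l
    simp only [Matrix.mul_apply, Matrix.transpose_apply, Matrix.one_apply, hAentry]
    have h := horth k l
    unfold empInner at h
    calc ∑ i, v k i / sn * (v l i / sn)
        = (1/(n:ℝ)) * ∑ i, v k i * v l i := by
          rw [Finset.mul_sum]
          refine Finset.sum_congr rfl fun i _ => ?_
          rw [div_mul_div_comm, hsnsq]
          ring
      _ = if k = l then 1 else 0 := h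
  have hA' : Aᵀ * A = 1 := mul_eq_one_comm.mp hA
  set a : Fin n → ℝ := fun k => empInner n f0 (v k) with ha_def
  have hEXP : ∀ (u : Fin n → ℝ) (i : Fin n), ∑ k, empInner n u (v k) * v k i = u i :=
    fun u i => emp_expansion n hn0 v horth u i
  have hLs : ∀ k, (L ^ s).mulVec (v k) = (lam k ^ s) • v k :=
    fun k => pow_mulVec_eig L (lam k) (v k) (heig k) s
  -- bias identity
  have hf0 : ∀ j, f0 j = ∑ k, a k * v k j := fun j => (hEXP f0 j).symm
  have hbias : empInner n ((L ^ s).mulVec f0) f0 = ∑ k, lam k ^ s * (a k)^2 := by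
    have hmv : (L ^ s).mulVec f0 = fun i => ∑ k, (lam k ^ s * a k) * v k i := by
      funext i
      have h0 : (L ^ s).mulVec f0 i = ∑ j, (L ^ s) i j * f0 j := rfl
      rw [h0]
      calc ∑ j, (L ^ s) i j * f0 j
          = ∑ j, (L ^ s) i j * ∑ k, a k * v k j := by
            refine Finset.sum_congr rfl fun j _ => ?_
            rw [← hf0 j]
        _ = ∑ k, a k * ∑ j, (L ^ s) i j * v k j := by
            simp_rw [Finset.mul_sum]
            rw [Finset.sum_comm]
            refine Finset.sum_congr rfl fun k _ => Finset.sum_congr rfl fun j _ => by ring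
        _ = ∑ k, a k * ((L ^ s).mulVec (v k) i) := rfl
        _ = ∑ k, (lam k ^ s * a k) * v k i := by
            refine Finset.sum_congr rfl fun k _ => ?_
            rw [hLs k]
            simp only [Pi.smul_apply, smul_eq_mul]
            ring
    rw [hmv]
    have hf0' : f0 = fun i => ∑ k, a k * v k i := funext hf0
    conv_lhs => rw [hf0']
    rw [emp_inner_expand n hn0 v horth (fun k => lam k ^ s * a k) a]
    refine Finset.sum_congr rfl fun k _ => by ring
  -- probability setup
  set wvec : Ω → (Fin n → ℝ) := fun ω i => w i ω with hwvec_def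
  have hwvec : Measurable wvec := measurable_pi_lambda _ hwmeas
  have hmap : P.map wvec = Measure.pi (fun _ : Fin n => gaussianReal 0 1) :=
    map_wvec_eq_pi P w hwmeas hwindep hwlaw
  set F : (Fin n → ℝ) → ℝ :=
    fun x => ∑ k ∈ univ.filter (fun k : Fin n => (k:ℕ) < K), (A.mulVec x k)^2 with hF_def
  have hFmeas : Measurable F :=
    Finset.measurable_sum _ fun k _ => ((measurable_mulVec A).eval).pow_const 2
  have hGmeasSet : MeasurableSet {x : Fin n → ℝ | 5*(K:ℝ) ≤ F x} :=
    measurableSet_le measurable_const hFmeas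
  have hcard : (univ.filter fun k : Fin n => (k:ℕ) < K).card = K :=
    card_filter_lt_fin n K (le_of_lt hKn')
  have hquad := lintegral_exp_quad n K A hA hA' (t := 2/5) (by norm_num) (by norm_num)
  have hsqrt5 : Real.sqrt (1/(1-2*(2/5 : ℝ))) = Real.sqrt 5 := by norm_num
  rw [hsqrt5, hcard] at hquad
  -- Markov bound
  have hfmeas' : AEMeasurable (fun x : Fin n → ℝ => ENNReal.ofReal (Real.exp ((2/5) * F x)))
      (Measure.pi (fun _ : Fin n => gaussianReal 0 1)) :=
    (ENNReal.measurable_ofReal.comp (Real.measurable_exp.comp (hFmeas.const_mul _))).aemeasurable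
  have hmarkov := mul_meas_ge_le_lintegral₀ hfmeas'
    (ENNReal.ofReal (Real.exp ((2/5) * (5*(K:ℝ)))))
  have hsetsub : {x : Fin n → ℝ | 5*(K:ℝ) ≤ F x} ⊆
      {x : Fin n → ℝ | ENNReal.ofReal (Real.exp ((2/5) * (5*(K:ℝ)))) ≤
        ENNReal.ofReal (Real.exp ((2/5) * F x))} := by
    intro x hx
    simp only [Set.mem_setOf_eq] at hx ⊢
    exact ENNReal.ofReal_le_ofReal (Real.exp_le_exp.mpr (by linarith))
  have hsqrt5e : Real.sqrt 5 ≤ Real.exp 1 := by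
    have h5 : (5:ℝ) ≤ (Real.exp 1)^2 := by nlinarith [Real.exp_one_gt_d9]
    calc Real.sqrt 5 ≤ Real.sqrt ((Real.exp 1)^2) := Real.sqrt_le_sqrt h5
      _ = Real.exp 1 := Real.sqrt_sq (Real.exp_pos 1).le
  have hfinal : (Measure.pi (fun _ : Fin n => gaussianReal 0 1)) {x | 5*(K:ℝ) ≤ F x}
      ≤ ENNReal.ofReal (Real.exp (-(K:ℝ))) := by
    have hc0 : ENNReal.ofReal (Real.exp ((2/5) * (5*(K:ℝ)))) ≠ 0 := by
      simp [ENNReal.ofReal_eq_zero, not_le, Real.exp_pos]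
    have hctop : ENNReal.ofReal (Real.exp ((2/5) * (5*(K:ℝ)))) ≠ ⊤ := ENNReal.ofReal_ne_top
    rw [← ENNReal.mul_le_mul_iff_right hc0 hctop]
    calc ENNReal.ofReal (Real.exp ((2/5) * (5*(K:ℝ)))) *
          (Measure.pi (fun _ : Fin n => gaussianReal 0 1)) {x | 5*(K:ℝ) ≤ F x}
        ≤ ENNReal.ofReal (Real.exp ((2/5) * (5*(K:ℝ)))) *
          (Measure.pi (fun _ : Fin n => gaussianReal 0 1))
            {x | ENNReal.ofReal (Real.exp ((2/5) * (5*(K:ℝ)))) ≤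
              ENNReal.ofReal (Real.exp ((2/5) * F x))} :=
          mul_le_mul_right (measure_mono hsetsub) _
      _ ≤ ∫⁻ x, ENNReal.ofReal (Real.exp ((2/5) * F x))
            ∂(Measure.pi (fun _ : Fin n => gaussianReal 0 1)) := hmarkov
      _ = ENNReal.ofReal (Real.sqrt 5 ^ K) := hquad
      _ ≤ ENNReal.ofReal (Real.exp ((2/5) * (5*(K:ℝ)))) * ENNReal.ofReal (Real.exp (-(K:ℝ))) := by
          rw [← ENNReal.ofReal_mul (Real.exp_nonneg _)]
          apply ENNReal.ofReal_le_ofReal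
          rw [← Real.exp_add]
          have h1 : (2/5) * (5*(K:ℝ)) + (-(K:ℝ)) = K := by ring
          rw [h1]
          calc Real.sqrt 5 ^ K ≤ (Real.exp 1) ^ K :=
                pow_le_pow_left₀ (Real.sqrt_nonneg 5) hsqrt5e K
            _ = Real.exp K := by rw [← Real.exp_nat_mul]; norm_num
  -- the good event
  set G : Set Ω := wvec ⁻¹' {x : Fin n → ℝ | F x ≤ 5*(K:ℝ)} with hG_def
  have hGmeas : MeasurableSet G := hwvec (measurableSet_le hFmeas measurable_const)
  have hGc : P Gᶜ ≤ ENNReal.ofReal (Real.exp (-(K:ℝ))) := by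
    have hsub2 : Gᶜ ⊆ wvec ⁻¹' {x : Fin n → ℝ | 5*(K:ℝ) ≤ F x} := by
      intro ω hω
      simp only [hG_def, Set.mem_compl_iff, Set.mem_preimage, Set.mem_setOf_eq] at hω ⊢
      exact (lt_of_not_ge hω).le
    calc P Gᶜ ≤ P (wvec ⁻¹' {x : Fin n → ℝ | 5*(K:ℝ) ≤ F x}) := measure_mono hsub2
      _ = (P.map wvec) {x : Fin n → ℝ | 5*(K:ℝ) ≤ F x} :=
          (Measure.map_apply hwvec hGmeasSet).symm
      _ ≤ ENNReal.ofReal (Real.exp (-(K:ℝ))) := by rw [hmap]; exact hfinal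
  -- deterministic inclusion
  have hGsub : G ⊆ {ω | empInner n (fun i => fhat ω i - f0 i) (fun i => fhat ω i - f0 i)
      ≤ empInner n ((L ^ s).mulVec f0) f0 / lam ⟨K, by omega⟩ ^ s + 5 * K / n} := by
    intro ω hω
    simp only [hG_def, Set.mem_preimage, Set.mem_setOf_eq] at hω
    simp only [Set.mem_setOf_eq]
    set b : Fin n → ℝ := fun k => empInner n (fun i => w i ω) (v k) with hb_def
    have hYk : ∀ k, empInner n (Y ω) (v k) = a k + b k := by
      intro k
      simp only [ha_def, hb_def]
      unfold empInner
      rw [← mul_add, ← Finset.sum_add_distrib]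
      congr 1
      refine Finset.sum_congr rfl fun i _ => ?_
      rw [hY ω i]
      ring
    set cc : Fin n → ℝ := fun k => if (k:ℕ) < K then b k else -(a k) with hcc_def
    have herr : (fun i => fhat ω i - f0 i) = fun i => ∑ k, cc k * v k i := by
      funext i
      rw [hfhat ω, Finset.sum_apply]
      simp only [Pi.smul_apply, smul_eq_mul]
      rw [Finset.sum_filter]
      conv_lhs => rw [hf0 i]
      rw [← Finset.sum_sub_distrib]
      refine Finset.sum_congr rfl fun k _ => ?_
      simp only [hcc_def]
      by_cases hk : (k:ℕ) < K
      · rw [if_pos hk, if_pos hk, hYk k]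
        ring
      · rw [if_neg hk, if_neg hk]
        ring
    rw [herr, emp_inner_expand n hn0 v horth cc cc]
    have hsplit : ∑ k, cc k * cc k =
        (∑ k ∈ univ.filter (fun k : Fin n => (k:ℕ) < K), (b k)^2)
          + ∑ k ∈ univ.filter (fun k : Fin n => ¬((k:ℕ) < K)), (a k)^2 := by
      rw [← Finset.sum_filter_add_sum_filter_not univ (fun k : Fin n => (k:ℕ) < K)
        (fun k => cc k * cc k)]
      congr 1
      · refine Finset.sum_congr rfl fun k hk => ?_
        rw [Finset.mem_filter] at hk
        simp only [hcc_def]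
        rw [if_pos hk.2]
        ring
      · refine Finset.sum_congr rfl fun k hk => ?_
        rw [Finset.mem_filter] at hk
        simp only [hcc_def]
        rw [if_neg hk.2]
        ring
    have hvar : ∑ k ∈ univ.filter (fun k : Fin n => (k:ℕ) < K), (b k)^2 ≤ 5*(K:ℝ)/n := by
      have hrel : ∀ k, (A.mulVec (wvec ω) k)^2 = (n:ℝ) * (b k)^2 := by
        intro k
        have h1 : A.mulVec (wvec ω) k = (∑ i, v k i * w i ω) / sn := by
          simp only [Matrix.mulVec, dotProduct, hAentry, hwvec_def]
          rw [Finset.sum_div]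
          exact Finset.sum_congr rfl fun i _ => by ring
        have hb : b k = (1/(n:ℝ)) * ∑ i, w i ω * v k i := rfl
        have hsum : ∑ i, w i ω * v k i = ∑ i, v k i * w i ω :=
          Finset.sum_congr rfl fun i _ => mul_comm _ _
        rw [h1, div_pow, hb, hsum, mul_pow]
        have hsq : sn^2 = (n:ℝ) := by rw [pow_two, hsnsq]
        rw [hsq]
        field_simp
      have hFval : F (wvec ω) = (n:ℝ) *
          ∑ k ∈ univ.filter (fun k : Fin n => (k:ℕ) < K), (b k)^2 := by
        rw [hF_def, Finset.mul_sum]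
        exact Finset.sum_congr rfl fun k _ => hrel k
      rw [hFval] at hω
      rw [div_eq_inv_mul, ← mul_le_mul_iff_right₀ hn0] 
      calc (n:ℝ) * ∑ k ∈ univ.filter (fun k : Fin n => (k:ℕ) < K), (b k)^2
          ≤ 5*(K:ℝ) := hω
        _ = (n:ℝ) * ((n:ℝ)⁻¹ * (5*(K:ℝ))) := by field_simp
    have hbb : ∑ k ∈ univ.filter (fun k : Fin n => ¬((k:ℕ) < K)), (a k)^2
        ≤ empInner n ((L ^ s).mulVec f0) f0 / lam ⟨K, by omega⟩ ^ s := by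
      have hlpos : 0 < lam (⟨K, by omega⟩ : Fin n) ^ s := pow_pos hlamK s
      rw [hbias, le_div_iff₀ hlpos]
      calc (∑ k ∈ univ.filter (fun k : Fin n => ¬((k:ℕ) < K)), (a k)^2) *
            lam (⟨K, by omega⟩ : Fin n) ^ s
          = ∑ k ∈ univ.filter (fun k : Fin n => ¬((k:ℕ) < K)),
              lam (⟨K, by omega⟩ : Fin n) ^ s * (a k)^2 := by
            rw [Finset.sum_mul]
            exact Finset.sum_congr rfl fun k _ => by ring
        _ ≤ ∑ k ∈ univ.filter (fun k : Fin n => ¬((k:ℕ) < K)), lam k ^ s * (a k)^2 := by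
            refine Finset.sum_le_sum fun k hk => ?_
            rw [Finset.mem_filter] at hk
            have hKk : (⟨K, by omega⟩ : Fin n) ≤ k := by
              rw [Fin.le_def]
              simpa using le_of_not_gt hk.2
            have hlle : lam (⟨K, by omega⟩ : Fin n) ≤ lam k := hmono hKk
            have hp : lam (⟨K, by omega⟩ : Fin n) ^ s ≤ lam k ^ s :=
              pow_le_pow_left₀ (hnonneg _) hlle s
            exact mul_le_mul_of_nonneg_right hp (sq_nonneg _)
        _ ≤ ∑ k, lam k ^ s * (a k)^2 :=
            Finset.sum_le_sum_of_subset_of_nonneg (Finset.filter_subset _ _)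
              (fun k _ _ => mul_nonneg (pow_nonneg (hnonneg k) s) (sq_nonneg _))
    calc ∑ k, cc k * cc k
        = (∑ k ∈ univ.filter (fun k : Fin n => (k:ℕ) < K), (b k)^2)
          + ∑ k ∈ univ.filter (fun k : Fin n => ¬((k:ℕ) < K)), (a k)^2 := hsplit
      _ ≤ empInner n ((L ^ s).mulVec f0) f0 / lam ⟨K, by omega⟩ ^ s + 5 * K / n := by
          have := add_le_add hvar hbb
          linarith
  -- final arithmetic
  have hsum : (P G).toReal + (P Gᶜ).toReal = 1 := by
    rw [← ENNReal.toReal_add (measure_ne_top _ _) (measure_ne_top _ _),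
      prob_add_prob_compl hGmeas]
    simp
  have hq : (P Gᶜ).toReal ≤ Real.exp (-(K:ℝ)) := by
    have h := ENNReal.toReal_mono ENNReal.ofReal_ne_top hGc
    rwa [ENNReal.toReal_ofReal (Real.exp_nonneg _)] at h
  calc 1 - Real.exp (-(K:ℝ)) ≤ (P G).toReal := by linarith
    _ ≤ (P {ω | empInner n (fun i => fhat ω i - f0 i) (fun i => fhat ω i - f0 i)
          ≤ empInner n ((L ^ s).mulVec f0) f0 / lam ⟨K, by omega⟩ ^ s + 5 * K / n}).toReal :=
        ENNReal.toReal_mono (measure_ne_top _ _) (measure_mono hGsub)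
end

section
/- Let X_1,…,X_n be i.i.d. random vectors in ℝ^d with distribution P, let f : ℝ^d → ℝ be bounded and measurable, let η : [0,∞) → [0,∞) be bounded and measurable, let ε > 0, and let s ≥ 1 be an integer. For an index j define the random difference operator D_j on functions g by D_j g(x) = (g(x) − g(X_j)) η(‖X_j − x‖/ε), and define the nonlocal operator A_{P,ε} by A_{P,ε} g(x) = ε^{−(d+2)} ∫ (g(x) − g(z)) η(‖z − x‖/ε) dP(z). Then for any pairwise distinct indices i, j_1, …, j_s ∈ {1,…,n}, E[ (D_{j_1} ∘ ⋯ ∘ D_{j_s} f)(X_i) · f(X_i) ] = ε^{s(d+2)} ∫ (A_{P,ε}^s f)(x) f(x) dP(x), where A_{P,ε}^s denotes the s-fold composition of A_{P,ε}. -/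
open MeasureTheory ProbabilityTheory

/-- The random difference operator `D_ξ g (x) = (g(x) - g(ξ)) η(‖ξ - x‖/ε)`. -/
noncomputable def Dop {E : Type*} [NormedAddCommGroup E]
    (η : ℝ → ℝ) (ε : ℝ) (ξ : E) (g : E → ℝ) (x : E) : ℝ :=
  (g x - g ξ) * η (‖ξ - x‖ / ε)

/-- Composition `D_{ξ₁} ∘ ⋯ ∘ D_{ξ_s}` of the difference operators along a list of points. -/
noncomputable def DopList {E : Type*} [NormedAddCommGroup E]
    (η : ℝ → ℝ) (ε : ℝ) : List E → (E → ℝ) → E → ℝ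
  | [], g => g
  | ξ :: l, g => Dop η ε ξ (DopList η ε l g)

/-- The nonlocal operator `A_{P,ε} g (x) = ε^{-(d+2)} ∫ (g(x) - g(z)) η(‖z-x‖/ε) dP(z)`. -/
noncomputable def nonlocalOp {E : Type*} [NormedAddCommGroup E] [MeasurableSpace E]
    (μ : Measure E) (η : ℝ → ℝ) (ε : ℝ) (d : ℕ) (g : E → ℝ) (x : E) : ℝ :=
  ((ε : ℝ) ^ (d + 2))⁻¹ * ∫ z, (g x - g z) * η (‖z - x‖ / ε) ∂μ

section Aux

variable {E : Type*} [NormedAddCommGroup E] [MeasurableSpace E] [BorelSpace E] [SecondCountableTopology E]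

/-- integrability from boundedness -/
lemma aux_integrable_of_bdd {α : Type*} [MeasurableSpace α] (ν : Measure α) [IsFiniteMeasure ν]
    {g : α → ℝ} (hm : AEStronglyMeasurable g ν) {C : ℝ} (hb : ∀ a, |g a| ≤ C) :
    Integrable g ν :=
  ⟨hm, HasFiniteIntegral.of_bounded (C := C) (ae_of_all _ (fun a => by
    simpa [Real.norm_eq_abs] using hb a))⟩

/-- joint measurability of the iterated difference operator -/
lemma aux_dopList_meas {f : E → ℝ} (hfm : Measurable f)
    {η : ℝ → ℝ} (hηm : Measurable η) (ε : ℝ) :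
    ∀ s : ℕ, Measurable (fun p : (Fin s → E) × E => DopList η ε (List.ofFn p.1) f p.2)
  | 0 => by
      simp only [List.ofFn_zero, DopList]
      exact hfm.comp measurable_snd
  | (s + 1) => by
      have IH := aux_dopList_meas hfm hηm ε s
      have hrw : ∀ p : (Fin (s+1) → E) × E,
          DopList η ε (List.ofFn p.1) f p.2 =
          (DopList η ε (List.ofFn fun t => p.1 t.succ) f p.2
            - DopList η ε (List.ofFn fun t => p.1 t.succ) f (p.1 0))
            * η (‖p.1 0 - p.2‖ / ε) := by
        intro p
        rw [List.ofFn_succ]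
        simp [DopList, Dop]
      simp only [hrw]
      have h1 : Measurable (fun p : (Fin (s+1) → E) × E => ((fun t : Fin s => p.1 t.succ, p.2) : (Fin s → E) × E)) :=
        Measurable.prodMk (measurable_pi_lambda _ fun t =>
          (measurable_pi_apply t.succ).comp measurable_fst) measurable_snd
      have h2 : Measurable (fun p : (Fin (s+1) → E) × E => ((fun t : Fin s => p.1 t.succ, p.1 0) : (Fin s → E) × E)) :=
        Measurable.prodMk (measurable_pi_lambda _ fun t =>
          (measurable_pi_apply t.succ).comp measurable_fst)
          ((measurable_pi_apply 0).comp measurable_fst)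
      have h3 : Measurable (fun p : (Fin (s+1) → E) × E => η (‖p.1 0 - p.2‖ / ε)) := by
        apply hηm.comp
        apply Measurable.div_const
        apply Measurable.norm
        exact ((measurable_pi_apply 0).comp measurable_fst).sub measurable_snd
      exact ((IH.comp h1).sub (IH.comp h2)).mul h3

omit [MeasurableSpace E] [BorelSpace E] [SecondCountableTopology E] in
/-- bound on the iterated difference operator -/
lemma aux_dopList_bound {f : E → ℝ} {Cf : ℝ} (hfb : ∀ x, |f x| ≤ Cf)
    {η : ℝ → ℝ} {Cη : ℝ} (hηb : ∀ t, |η t| ≤ Cη) (ε : ℝ) :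
    ∀ (l : List E) (x : E), |DopList η ε l f x| ≤ Cf * (2 * Cη) ^ l.length
  | [], x => by simpa [DopList] using hfb x
  | ξ :: l, x => by
      have hCη : 0 ≤ Cη := le_trans (abs_nonneg _) (hηb 0)
      have hB : 0 ≤ Cf * (2 * Cη) ^ l.length := by
        have hCf : 0 ≤ Cf := le_trans (abs_nonneg _) (hfb x)
        positivity
      have h1 := aux_dopList_bound hfb hηb ε l x
      have h2 := aux_dopList_bound hfb hηb ε l ξ
      have : |DopList η ε (ξ :: l) f x|
          ≤ (|DopList η ε l f x| + |DopList η ε l f ξ|) * Cη := by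
        simp only [DopList, Dop, abs_mul]
        apply mul_le_mul (abs_sub _ _) (hηb _) (abs_nonneg _)
        positivity
      calc |DopList η ε (ξ :: l) f x|
          ≤ (|DopList η ε l f x| + |DopList η ε l f ξ|) * Cη := this
        _ ≤ (Cf * (2 * Cη) ^ l.length + Cf * (2 * Cη) ^ l.length) * Cη := by
            apply mul_le_mul_of_nonneg_right (add_le_add h1 h2) hCη
        _ = Cf * (2 * Cη) ^ (l.length + 1) := by ring
        _ = Cf * (2 * Cη) ^ (ξ :: l).length := by simp

end Aux

section Aux2

variable {E : Type*} [NormedAddCommGroup E] [MeasurableSpace E] [BorelSpace E]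
  [SecondCountableTopology E]
variable (μ : Measure E) [IsProbabilityMeasure μ]

/-- measurability of the nonlocal operator -/
lemma aux_nonlocal_meas {g : E → ℝ} (hgm : Measurable g)
    {η : ℝ → ℝ} (hηm : Measurable η) (ε : ℝ) (d : ℕ) :
    Measurable (nonlocalOp μ η ε d g) := by
  apply Measurable.const_mul
  have hker : StronglyMeasurable (fun p : E × E => (g p.1 - g p.2) * η (‖p.2 - p.1‖ / ε)) := by
    apply Measurable.stronglyMeasurable
    exact ((hgm.comp measurable_fst).sub (hgm.comp measurable_snd)).mul
      (hηm.comp (((measurable_snd.sub measurable_fst).norm).div_const ε))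
  exact hker.integral_prod_right'.measurable

/-- bound for the nonlocal operator -/
lemma aux_nonlocal_bound {g : E → ℝ} {C : ℝ} (hgb : ∀ x, |g x| ≤ C)
    {η : ℝ → ℝ} {Cη : ℝ} (hηb : ∀ t, |η t| ≤ Cη) {ε : ℝ} (hε : 0 < ε) (d : ℕ) :
    ∀ x, |nonlocalOp μ η ε d g x| ≤ (ε ^ (d + 2))⁻¹ * (2 * Cη) * C := by
  intro x
  have hCη : 0 ≤ Cη := le_trans (abs_nonneg _) (hηb 0)
  have hC : 0 ≤ C := le_trans (abs_nonneg _) (hgb x)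
  have hbd : ∀ z, ‖(g x - g z) * η (‖z - x‖ / ε)‖ ≤ 2 * C * Cη := by
    intro z
    rw [Real.norm_eq_abs, abs_mul]
    calc |g x - g z| * |η (‖z - x‖ / ε)| ≤ (|g x| + |g z|) * Cη :=
          mul_le_mul (abs_sub _ _) (hηb _) (abs_nonneg _) (by positivity)
      _ ≤ (C + C) * Cη := by
          apply mul_le_mul_of_nonneg_right (add_le_add (hgb x) (hgb z)) hCη
      _ = 2 * C * Cη := by ring
  have hint : ‖∫ z, (g x - g z) * η (‖z - x‖ / ε) ∂μ‖ ≤ 2 * C * Cη * (μ Set.univ).toReal :=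
    norm_integral_le_of_norm_le_const (ae_of_all _ hbd)
  rw [measure_univ, ENNReal.toReal_one, mul_one] at hint
  rw [nonlocalOp, abs_mul, abs_inv, abs_pow, abs_of_pos hε]
  calc (ε ^ (d + 2))⁻¹ * |∫ z, (g x - g z) * η (‖z - x‖ / ε) ∂μ|
      ≤ (ε ^ (d + 2))⁻¹ * (2 * C * Cη) := by
        apply mul_le_mul_of_nonneg_left _ (by positivity)
        simpa [Real.norm_eq_abs] using hint
    _ = (ε ^ (d + 2))⁻¹ * (2 * Cη) * C := by ring

/-- measurability and bound for iterates -/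
lemma aux_iter_meas_bound {f : E → ℝ} (hfm : Measurable f) {Cf : ℝ} (hfb : ∀ x, |f x| ≤ Cf)
    {η : ℝ → ℝ} (hηm : Measurable η) {Cη : ℝ} (hηb : ∀ t, |η t| ≤ Cη)
    {ε : ℝ} (hε : 0 < ε) (d : ℕ) :
    ∀ s : ℕ, Measurable ((nonlocalOp μ η ε d)^[s] f)
      ∧ ∀ x, |(nonlocalOp μ η ε d)^[s] f x| ≤ ((ε ^ (d + 2))⁻¹ * (2 * Cη)) ^ s * Cf
  | 0 => by simpa using ⟨hfm, hfb⟩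
  | (s + 1) => by
      obtain ⟨hm, hb⟩ := aux_iter_meas_bound hfm hfb hηm hηb hε d s
      rw [Function.iterate_succ_apply']
      constructor
      · exact aux_nonlocal_meas μ hm hηm ε (d := d)
      · intro x
        calc |nonlocalOp μ η ε d ((nonlocalOp μ η ε d)^[s] f) x|
            ≤ (ε ^ (d + 2))⁻¹ * (2 * Cη) * (((ε ^ (d + 2))⁻¹ * (2 * Cη)) ^ s * Cf) :=
              aux_nonlocal_bound μ hb hηb hε d x
          _ = ((ε ^ (d + 2))⁻¹ * (2 * Cη)) ^ (s + 1) * Cf := by ring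

end Aux2

section Aux3

variable {E : Type*} [NormedAddCommGroup E] [MeasurableSpace E] [BorelSpace E]
  [SecondCountableTopology E]
variable (μ : Measure E) [IsProbabilityMeasure μ]
variable {f : E → ℝ} {η : ℝ → ℝ} {Cf Cη : ℝ} {ε : ℝ}

lemma aux_pi_integral (hfm : Measurable f) (hfb : ∀ x, |f x| ≤ Cf)
    (hηm : Measurable η) (hηb : ∀ t, |η t| ≤ Cη) (hε : 0 < ε) (d : ℕ) :
    ∀ s : ℕ, ∀ x : E,
      ∫ v, DopList η ε (List.ofFn v) f x ∂(Measure.pi fun _ : Fin s => μ)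
        = ε ^ (s * (d + 2)) * (nonlocalOp μ η ε d)^[s] f x
  | 0 => by
      intro x
      simp [DopList]
  | (s + 1) => by
      intro x
      have IH := aux_pi_integral hfm hfb hηm hηb hε d s
      have hεne : (ε : ℝ) ^ (d + 2) ≠ 0 := by positivity
      set A := nonlocalOp μ η ε d with hA
      set G : (Fin s → E) → E → ℝ := fun w y => DopList η ε (List.ofFn w) f y with hG
      set πs : Measure (Fin s → E) := Measure.pi fun _ : Fin s => μ with hπs
      have mp := (measurePreserving_piFinSuccAbove (fun _ : Fin (s+1) => μ) 0).symm
      set e := MeasurableEquiv.piFinSuccAbove (fun _ : Fin (s+1) => E) 0 with he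
      have hsymm : ∀ p : E × (Fin s → E), e.symm p = Fin.cons p.1 p.2 := by
        intro p
        simp [he, MeasurableEquiv.piFinSuccAbove_symm_apply, Fin.insertNthEquiv,
          Fin.insertNth_zero']
      have hcons : ∀ (ξ : E) (w : Fin s → E),
          DopList η ε (List.ofFn (Fin.cons ξ w)) f x
            = (G w x - G w ξ) * η (‖ξ - x‖ / ε) := by
        intro ξ w
        rw [List.ofFn_succ]
        simp only [Fin.cons_zero, Fin.cons_succ]
        simp [DopList, Dop, hG]
      have hstep : ∫ v, DopList η ε (List.ofFn v) f x ∂(Measure.pi fun _ : Fin (s+1) => μ)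
          = ∫ p : E × (Fin s → E), (G p.2 x - G p.2 p.1) * η (‖p.1 - x‖ / ε) ∂(μ.prod πs) := by
        rw [← mp.integral_comp' (fun v => DopList η ε (List.ofFn v) f x)]
        apply integral_congr_ae
        filter_upwards with p
        rw [hsymm p, hcons p.1 p.2]
      rw [hstep]
      -- integrability of the full kernel on the product
      have hGm := aux_dopList_meas hfm hηm ε s
      have hmf : Measurable (fun p : E × (Fin s → E) =>
          (G p.2 x - G p.2 p.1) * η (‖p.1 - x‖ / ε)) := by
        have h1 : Measurable (fun p : E × (Fin s → E) => G p.2 x) :=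
          hGm.comp (measurable_snd.prodMk measurable_const)
        have h2 : Measurable (fun p : E × (Fin s → E) => G p.2 p.1) :=
          hGm.comp (measurable_snd.prodMk measurable_fst)
        exact (h1.sub h2).mul (hηm.comp ((measurable_fst.sub measurable_const).norm.div_const ε))
      have hCη : 0 ≤ Cη := le_trans (abs_nonneg _) (hηb 0)
      have hGb : ∀ w y, |G w y| ≤ Cf * (2 * Cη) ^ s := by
        intro w y
        simpa [hG, List.length_ofFn] using aux_dopList_bound hfb hηb ε (List.ofFn w) y
      have hbd : ∀ p : E × (Fin s → E),
          |(G p.2 x - G p.2 p.1) * η (‖p.1 - x‖ / ε)| ≤ 2 * (Cf * (2 * Cη) ^ s) * Cη := by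
        intro p
        rw [abs_mul]
        calc |G p.2 x - G p.2 p.1| * |η (‖p.1 - x‖ / ε)|
            ≤ (|G p.2 x| + |G p.2 p.1|) * Cη :=
              mul_le_mul (abs_sub _ _) (hηb _) (abs_nonneg _) (by positivity)
          _ ≤ (Cf * (2 * Cη) ^ s + Cf * (2 * Cη) ^ s) * Cη :=
              mul_le_mul_of_nonneg_right (add_le_add (hGb _ _) (hGb _ _)) hCη
          _ = 2 * (Cf * (2 * Cη) ^ s) * Cη := by ring
      have hint : Integrable (fun p : E × (Fin s → E) =>
          (G p.2 x - G p.2 p.1) * η (‖p.1 - x‖ / ε)) (μ.prod πs) :=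
        aux_integrable_of_bdd _ hmf.aestronglyMeasurable hbd
      rw [integral_prod _ hint]
      -- inner integral
      have hintx : ∀ y : E, Integrable (fun w => G w y) πs := by
        intro y
        exact aux_integrable_of_bdd _
          ((hGm.comp (measurable_id.prodMk measurable_const)).aestronglyMeasurable)
          (fun w => hGb w y)
      have hinner : ∀ ξ : E,
          ∫ w, (G w x - G w ξ) * η (‖ξ - x‖ / ε) ∂πs
            = ε ^ (s * (d + 2)) * ((A^[s] f x - A^[s] f ξ) * η (‖ξ - x‖ / ε)) := by
        intro ξ
        rw [integral_mul_const, integral_sub (hintx x) (hintx ξ)]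
        rw [show (∫ w, G w x ∂πs) = ε ^ (s * (d + 2)) * A^[s] f x from IH x,
          show (∫ w, G w ξ ∂πs) = ε ^ (s * (d + 2)) * A^[s] f ξ from IH ξ]
        ring
      simp only [hinner]
      rw [integral_const_mul]
      have hlast : ∫ ξ, (A^[s] f x - A^[s] f ξ) * η (‖ξ - x‖ / ε) ∂μ
          = ε ^ (d + 2) * A^[s+1] f x := by
        rw [Function.iterate_succ_apply', hA]
        rw [nonlocalOp]
        field_simp
      rw [hlast, show (s + 1) * (d + 2) = s * (d + 2) + (d + 2) by ring, pow_add]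
      ring

end Aux3

section Aux4

variable {E : Type*} [NormedAddCommGroup E] [MeasurableSpace E]

lemma aux_joint_law {n m : ℕ} {Ω : Type*} [MeasurableSpace Ω]
    (P : Measure Ω) [IsProbabilityMeasure P]
    (μ : Measure E) [IsProbabilityMeasure μ]
    (X : Fin n → Ω → E) (hXmeas : ∀ j, Measurable (X j))
    (hXindep : iIndepFun X P)
    (hXlaw : ∀ j, P.map (X j) = μ)
    (k : Fin (m + 1) → Fin n) (hk : Function.Injective k) :
    P.map (fun ω => fun t => X (k t) ω) = Measure.pi (fun _ : Fin (m + 1) => μ) := by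
  symm
  apply Measure.pi_eq
  intro sets hsets
  have hY : Measurable (fun ω => fun t => X (k t) ω) :=
    measurable_pi_lambda _ fun t => hXmeas (k t)
  rw [Measure.map_apply hY (MeasurableSet.univ_pi hsets)]
  have hkinv : ∀ t, Function.invFun k (k t) = t := fun t =>
    Function.leftInverse_invFun hk t
  set S : Finset (Fin n) := Finset.univ.image k with hS
  set g : Fin n → Set E := fun j => sets (Function.invFun k j) with hg
  have hgk : ∀ t, g (k t) = sets t := by
    intro t; rw [hg]; simp only; rw [hkinv]
  have hpre : (fun ω => fun t => X (k t) ω) ⁻¹' (Set.univ.pi sets)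
      = ⋂ j ∈ S, X j ⁻¹' g j := by
    ext ω
    simp only [Set.mem_preimage, Set.mem_pi, Set.mem_univ, true_implies, Set.mem_iInter,
      hS, Finset.mem_image, Finset.mem_univ, true_and]
    constructor
    · rintro h j ⟨t, rfl⟩
      rw [hgk]
      exact h t
    · intro h t
      have := h (k t) ⟨t, rfl⟩
      rwa [hgk] at this
  rw [hpre, hXindep.measure_inter_preimage_eq_mul S (fun j _ => by
    rw [hg]; exact hsets _)]
  rw [hS, Finset.prod_image (fun a _ b _ h => hk h)]
  apply Finset.prod_congr rfl
  intro t _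
  rw [hgk, ← Measure.map_apply (hXmeas (k t)) (hsets t), hXlaw]

end Aux4


/-- If `X₁,…,Xₙ` are i.i.d. with distribution `P = μ` on `ℝ^d`, `f` is bounded
measurable, `η : [0,∞) → [0,∞)` bounded measurable, `ε > 0`, `s ≥ 1`, then for pairwise distinct
indices `i, j₁, …, j_s`,
`E[(D_{j₁} ∘ ⋯ ∘ D_{j_s} f)(Xᵢ) · f(Xᵢ)] = ε^{s(d+2)} ∫ (A_{P,ε}^s f)(x) f(x) dP(x)`. -/
theorem ustatistic_unbiasedness
    (d n : ℕ)
    (Ω : Type*) [MeasurableSpace Ω] (P : Measure Ω) [IsProbabilityMeasure P]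
    (μ : Measure (EuclideanSpace ℝ (Fin d))) [IsProbabilityMeasure μ]
    (X : Fin n → Ω → EuclideanSpace ℝ (Fin d))
    (hXmeas : ∀ i, Measurable (X i))
    (hXindep : iIndepFun X P)
    (hXlaw : ∀ i, P.map (X i) = μ)
    (f : EuclideanSpace ℝ (Fin d) → ℝ) (hfm : Measurable f)
    (Cf : ℝ) (hfb : ∀ x, |f x| ≤ Cf)
    (η : ℝ → ℝ) (hηm : Measurable η) (hηnonneg : ∀ t, 0 ≤ η t)
    (Cη : ℝ) (hηb : ∀ t, |η t| ≤ Cη)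
    (ε : ℝ) (hε : 0 < ε)
    (s : ℕ) (hs : 1 ≤ s)
    (i : Fin n) (js : Fin s → Fin n)
    (hinj : Function.Injective js) (hne : ∀ t, js t ≠ i) :
    ∫ ω, (DopList η ε (List.ofFn fun t => X (js t) ω) f) (X i ω) * f (X i ω) ∂P
      = ε ^ (s * (d + 2)) * ∫ x, ((nonlocalOp μ η ε d)^[s] f) x * f x ∂μ := by
  set A := nonlocalOp μ η ε d with hA
  set k : Fin (s + 1) → Fin n := Fin.cons i js with hk
  have hkinj : Function.Injective k := by
    rw [hk, Fin.cons_injective_iff]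
    refine ⟨?_, hinj⟩
    rintro ⟨t, ht⟩
    exact hne t ht
  set Y : Ω → (Fin (s + 1) → (EuclideanSpace ℝ (Fin d))) := fun ω => fun t => X (k t) ω with hY
  have hYm : Measurable Y := measurable_pi_lambda _ fun t => hXmeas (k t)
  have hlaw : P.map Y = Measure.pi (fun _ : Fin (s + 1) => μ) :=
    aux_joint_law P μ X hXmeas hXindep hXlaw k hkinj
  set G : (Fin s → (EuclideanSpace ℝ (Fin d))) → (EuclideanSpace ℝ (Fin d)) → ℝ := fun w y => DopList η ε (List.ofFn w) f y with hG
  set F : (Fin (s + 1) → (EuclideanSpace ℝ (Fin d))) → ℝ :=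
    fun v => G (fun t => v t.succ) (v 0) * f (v 0) with hF
  have hGm := aux_dopList_meas hfm hηm ε s
  have hFm : Measurable F := by
    have h0 : Measurable fun v : Fin (s + 1) → (EuclideanSpace ℝ (Fin d)) =>
        ((fun t : Fin s => v t.succ, v 0) : (Fin s → (EuclideanSpace ℝ (Fin d))) × (EuclideanSpace ℝ (Fin d))) :=
      Measurable.prodMk (measurable_pi_lambda _ fun t => measurable_pi_apply t.succ)
        (measurable_pi_apply 0)
    exact (hGm.comp h0).mul (hfm.comp (measurable_pi_apply 0))
  have hptwise : ∀ ω,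
      DopList η ε (List.ofFn fun t => X (js t) ω) f (X i ω) * f (X i ω) = F (Y ω) := by
    intro ω
    have h1 : ∀ t : Fin s, Y ω t.succ = X (js t) ω := by
      intro t; rw [hY]; simp only; rw [hk]; simp [Fin.cons_succ]
    have h2 : Y ω 0 = X i ω := by
      rw [hY]; simp only; rw [hk]; simp [Fin.cons_zero]
    rw [hF]
    simp only [hG, h2]
    rw [show (fun t : Fin s => Y ω t.succ) = fun t => X (js t) ω from funext h1]
  calc ∫ ω, DopList η ε (List.ofFn fun t => X (js t) ω) f (X i ω) * f (X i ω) ∂P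
      = ∫ ω, F (Y ω) ∂P := by
        apply integral_congr_ae
        filter_upwards with ω
        exact hptwise ω
    _ = ∫ v, F v ∂(P.map Y) :=
        (integral_map hYm.aemeasurable hFm.aestronglyMeasurable).symm
    _ = ∫ v, F v ∂(Measure.pi fun _ : Fin (s + 1) => μ) := by rw [hlaw]
    _ = ε ^ (s * (d + 2)) * ∫ x, A^[s] f x * f x ∂μ := ?_
  -- decompose the pi measure
  set πs : Measure (Fin s → (EuclideanSpace ℝ (Fin d))) := Measure.pi fun _ : Fin s => μ with hπs
  have mp := (measurePreserving_piFinSuccAbove (fun _ : Fin (s + 1) => μ) 0).symm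
  set e := MeasurableEquiv.piFinSuccAbove (fun _ : Fin (s + 1) => (EuclideanSpace ℝ (Fin d))) 0 with he
  have hsymm : ∀ p : (EuclideanSpace ℝ (Fin d)) × (Fin s → (EuclideanSpace ℝ (Fin d))), e.symm p = Fin.cons p.1 p.2 := by
    intro p
    simp [he, MeasurableEquiv.piFinSuccAbove_symm_apply, Fin.insertNthEquiv,
      Fin.insertNth_zero']
  have hFcons : ∀ p : (EuclideanSpace ℝ (Fin d)) × (Fin s → (EuclideanSpace ℝ (Fin d))), F (Fin.cons p.1 p.2) = G p.2 p.1 * f p.1 := by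
    intro p
    rw [hF]
    simp only [Fin.cons_zero]
    simp only [Fin.cons_succ]
  have hstep : ∫ v, F v ∂(Measure.pi fun _ : Fin (s + 1) => μ)
      = ∫ p : (EuclideanSpace ℝ (Fin d)) × (Fin s → (EuclideanSpace ℝ (Fin d))), G p.2 p.1 * f p.1 ∂(μ.prod πs) := by
    rw [← mp.integral_comp' F]
    apply integral_congr_ae
    filter_upwards with p
    rw [hsymm p, hFcons p]
  rw [hstep]
  -- integrability on the product
  have hCη : 0 ≤ Cη := le_trans (abs_nonneg _) (hηb 0)
  have hCf : 0 ≤ Cf := le_trans (abs_nonneg _) (hfb 0)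
  have hGb : ∀ w y, |G w y| ≤ Cf * (2 * Cη) ^ s := by
    intro w y
    simpa [hG, List.length_ofFn] using aux_dopList_bound hfb hηb ε (List.ofFn w) y
  have hmprod : Measurable fun p : (EuclideanSpace ℝ (Fin d)) × (Fin s → (EuclideanSpace ℝ (Fin d))) => G p.2 p.1 * f p.1 :=
    (hGm.comp (measurable_snd.prodMk measurable_fst)).mul (hfm.comp measurable_fst)
  have hbd : ∀ p : (EuclideanSpace ℝ (Fin d)) × (Fin s → (EuclideanSpace ℝ (Fin d))), |G p.2 p.1 * f p.1| ≤ Cf * (2 * Cη) ^ s * Cf := by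
    intro p
    rw [abs_mul]
    exact mul_le_mul (hGb _ _) (hfb _) (abs_nonneg _) (by positivity)
  have hint : Integrable (fun p : (EuclideanSpace ℝ (Fin d)) × (Fin s → (EuclideanSpace ℝ (Fin d))) => G p.2 p.1 * f p.1) (μ.prod πs) :=
    aux_integrable_of_bdd _ hmprod.aestronglyMeasurable hbd
  rw [integral_prod _ hint]
  have hinner : ∀ ξ : (EuclideanSpace ℝ (Fin d)), ∫ w, G w ξ * f ξ ∂πs = ε ^ (s * (d + 2)) * (A^[s] f ξ * f ξ) := by
    intro ξ
    rw [integral_mul_const, aux_pi_integral μ hfm hfb hηm hηb hε d s ξ]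
    ring
  simp only [hinner]
  rw [integral_const_mul]
end

section
/- Let d ≥ 1, s ≥ 1 be integers, let c0 > 0, and let φ : ℝ^{d−1} → [−c0, c0] be a Lipschitz function. Write points of ℝ^d as y = (y', y_d) with y' ∈ ℝ^{d−1}, let Q denote the open cube (−c0/2, c0/2)^d, and define U_φ = {y ∈ Q : φ(y') < y_d} and, for ε > 0, the collar V_φ(ε) = {y ∈ Q : φ(y') ≤ y_d ≤ φ(y') + ε}. Then there exists a constant C depending only on s such that for every smooth function f : ℝ^d → ℝ whose (compact) support is contained in U_φ and every 0 < ε < c0, ∫_{V_φ(ε)} f(y)² dy ≤ C ε^{2s} ∫_{ℝ^d} |∂_d^s f(y)|² dy, where ∂_d^s f denotes the s-th partial derivative of f in the d-th coordinate direction. -/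
open MeasureTheory

/-- The partial derivative in the last (`d`-th) coordinate direction of a function on
`ℝ^{d-1} × ℝ`. -/
noncomputable def lastDeriv {m : ℕ} (g : (EuclideanSpace ℝ (Fin m)) × ℝ → ℝ) :
    (EuclideanSpace ℝ (Fin m)) × ℝ → ℝ :=
  fun y => deriv (fun t => g (y.1, t)) y.2

section Auxiliary

open Set ContDiff


lemma cs_lemma (h : ℝ → ℝ) (hc : Continuous h) (a b : ℝ) (hab : a ≤ b) :
    (∫ t in Ioc a b, h t) ^ 2 ≤ (b - a) * ∫ t in Ioc a b, (h t) ^ 2 := by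
  set μ := volume.restrict (Ioc a b) with hμ
  haveI : IsFiniteMeasure μ := by
    constructor
    rw [hμ, Measure.restrict_apply_univ]
    exact (Real.volume_Ioc (a := a) (b := b)) ▸ ENNReal.ofReal_lt_top
  obtain ⟨M, hM⟩ := (isCompact_Icc (a := a) (b := b)).exists_bound_of_continuousOn
    hc.continuousOn
  have hmem : MemLp (fun t => |h t|) (ENNReal.ofReal 2) μ := by
    refine MemLp.of_bound (hc.abs.aestronglyMeasurable) M ?_
    refine ae_restrict_of_forall_mem measurableSet_Ioc fun t ht => ?_
    simpa [Real.norm_eq_abs, abs_abs] using hM t (Ioc_subset_Icc_self ht)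
  have hone : MemLp (fun _ : ℝ => (1 : ℝ)) (ENNReal.ofReal 2) μ := memLp_const 1
  have hpq : Real.HolderConjugate 2 2 := by constructor <;> norm_num
  have key := integral_mul_le_Lp_mul_Lq_of_nonneg (μ := μ) hpq
    (f := fun t => |h t|) (g := fun _ => (1 : ℝ))
    (Filter.Eventually.of_forall fun t => abs_nonneg _) (Filter.Eventually.of_forall fun t => one_pos.le)
    hmem hone
  simp only [mul_one] at key
  have h2 : ∀ t : ℝ, |h t| ^ (2 : ℝ) = (h t) ^ 2 := by
    intro t
    rw [show ((2:ℝ)) = ((2:ℕ) : ℝ) by norm_num, Real.rpow_natCast, sq_abs]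
  have hone2 : ∀ t : ℝ, (1 : ℝ) ^ (2 : ℝ) = (1 : ℝ) := fun t => by norm_num
  simp only [h2] at key
  have hμuniv : ∫ _, (1 : ℝ) ∂μ = b - a := by
    rw [integral_const, smul_eq_mul, mul_one, hμ, measureReal_restrict_apply_univ,
      Real.volume_real_Ioc_of_le hab]
  rw [show (fun _ : ℝ => (1:ℝ) ^ (2:ℝ)) = fun _ : ℝ => (1:ℝ) by funext t; norm_num] at key
  -- key : ∫ |h| ≤ (∫ h^2)^(1/2) * (∫ 1)^(1/2)
  have habs : |∫ t, h t ∂μ| ≤ ∫ t, |h t| ∂μ := by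
    simpa [Real.norm_eq_abs] using norm_integral_le_integral_norm (μ := μ) h
  have hnn : 0 ≤ ∫ t, (h t) ^ 2 ∂μ := integral_nonneg fun t => sq_nonneg _
  calc (∫ t in Ioc a b, h t) ^ 2 = |∫ t, h t ∂μ| ^ 2 := by rw [sq_abs]
    _ ≤ (∫ t, |h t| ∂μ) ^ 2 := by
        apply pow_le_pow_left₀ (abs_nonneg _) habs
    _ ≤ ((∫ t, (h t) ^ 2 ∂μ) ^ ((1:ℝ)/2) * (∫ _, (1:ℝ) ∂μ) ^ ((1:ℝ)/2)) ^ 2 := by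
        apply pow_le_pow_left₀ (integral_nonneg fun t => abs_nonneg _) key
    _ = (b - a) * ∫ t, (h t) ^ 2 ∂μ := by
        rw [mul_pow, ← Real.rpow_natCast ((∫ t, (h t) ^ 2 ∂μ) ^ ((1:ℝ)/2)) 2,
          ← Real.rpow_natCast ((∫ _, (1:ℝ) ∂μ) ^ ((1:ℝ)/2)) 2,
          ← Real.rpow_mul hnn, ← Real.rpow_mul (by rw [hμuniv]; linarith)]
        norm_num [hμuniv]
        ring

lemma deriv_zero_of_le (g : ℝ → ℝ) (hg : ContDiff ℝ ∞ g) (a : ℝ)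
    (h0 : ∀ t ≤ a, g t = 0) : ∀ t ≤ a, deriv g t = 0 := by
  have hlt : ∀ t < a, deriv g t = 0 := by
    intro t ht
    have hev : g =ᶠ[nhds t] (fun _ => (0:ℝ)) := by
      filter_upwards [Iio_mem_nhds ht] with u hu
      exact h0 u (le_of_lt hu)
    rw [hev.deriv_eq, deriv_const]
  intro t ht
  rcases eq_or_lt_of_le ht with rfl | ht'
  · -- continuity argument at a
    have hc : Continuous (deriv g) := (contDiff_infty_iff_deriv.mp hg).2.continuous
    have h1 : Filter.Tendsto (deriv g) (nhdsWithin t (Iio t)) (nhds (deriv g t)) :=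
      (hc.continuousAt.tendsto).mono_left nhdsWithin_le_nhds
    have h2 : Filter.Tendsto (deriv g) (nhdsWithin t (Iio t)) (nhds 0) := by
      apply Filter.Tendsto.congr' _ tendsto_const_nhds
      filter_upwards [self_mem_nhdsWithin] with u hu
      exact (hlt u hu).symm
    exact tendsto_nhds_unique h1 h2
  · exact hlt t ht'

lemma one_dim : ∀ (s : ℕ) (g : ℝ → ℝ), ContDiff ℝ ∞ g → ∀ (a ε : ℝ), 0 ≤ ε →
    (∀ t ≤ a, g t = 0) →
    ∫ t in Ioc a (a+ε), (g t)^2 ≤ ε^(2*s) * ∫ t in Ioc a (a+ε), (deriv^[s] g t)^2 := by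
  intro s
  induction s with
  | zero => intro g hg a ε hε h0; simp
  | succ s ih =>
    intro g hg a ε hε h0
    have hg' : ContDiff ℝ ∞ (deriv g) := (contDiff_infty_iff_deriv.mp hg).2
    have hd : Differentiable ℝ g := (contDiff_infty_iff_deriv.mp hg).1
    have h0' : ∀ t ≤ a, deriv g t = 0 := deriv_zero_of_le g hg a h0
    set C := ∫ t in Ioc a (a+ε), (deriv g t)^2 with hC
    have hCnn : 0 ≤ C := integral_nonneg fun t => sq_nonneg _
    have hCint : IntegrableOn (fun t => (deriv g t)^2) (Ioc a (a+ε)) volume :=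
      (hg'.continuous.pow 2).integrableOn_Ioc
    -- pointwise bound on the interval
    have hpt : ∀ t ∈ Ioc a (a+ε), (g t)^2 ≤ ε * C := by
      intro t ht
      have hat : a ≤ t := le_of_lt ht.1
      have hftc : g t = ∫ u in Ioc a t, deriv g u := by
        have := intervalIntegral.integral_deriv_eq_sub
          (f := g) (a := a) (b := t)
          (fun x _ => (hd x))
          ((hg'.continuous.intervalIntegrable a t))
        rw [intervalIntegral.integral_of_le hat] at this
        rw [this, h0 a le_rfl, sub_zero]
      have hcs : (g t)^2 ≤ (t - a) * ∫ u in Ioc a t, (deriv g u)^2 := by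
        rw [hftc]; exact cs_lemma (deriv g) hg'.continuous a t hat
      have hmono : ∫ u in Ioc a t, (deriv g u)^2 ≤ C := by
        apply setIntegral_mono_set hCint
        · exact Filter.Eventually.of_forall fun u => sq_nonneg _
        · exact (Ioc_subset_Ioc_right ht.2).eventuallyLE
      calc (g t)^2 ≤ (t - a) * ∫ u in Ioc a t, (deriv g u)^2 := hcs
        _ ≤ ε * C := by
            apply mul_le_mul (by linarith [ht.2]) hmono
              (integral_nonneg fun u => sq_nonneg _) hε
    -- integrate the pointwise bound
    have hstep : ∫ t in Ioc a (a+ε), (g t)^2 ≤ ε * (ε * C) := by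
      have := setIntegral_mono_on
        ((hg.continuous.pow 2).integrableOn_Ioc)
        (integrableOn_const (by rw [Real.volume_Ioc]; exact ENNReal.ofReal_ne_top))
        measurableSet_Ioc hpt
      calc ∫ t in Ioc a (a+ε), (g t)^2 ≤ ∫ _ in Ioc a (a+ε), (ε * C) := this
        _ = ε * (ε * C) := by
            rw [setIntegral_const, Real.volume_real_Ioc_of_le (by linarith), smul_eq_mul]
            ring_nf
    -- induction hypothesis applied to deriv g
    have hih := ih (deriv g) hg' a ε hε h0'
    calc ∫ t in Ioc a (a+ε), (g t)^2 ≤ ε * (ε * C) := hstep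
      _ ≤ ε * (ε * (ε^(2*s) * ∫ t in Ioc a (a+ε), (deriv^[s] (deriv g) t)^2)) := by
          apply mul_le_mul_of_nonneg_left (mul_le_mul_of_nonneg_left hih hε) hε
      _ = ε^(2*(s+1)) * ∫ t in Ioc a (a+ε), (deriv^[s+1] g t)^2 := by
          simp only [Function.iterate_succ_apply]
          ring

section TwoD


lemma lastDeriv_slice (k : ℕ) (f : (EuclideanSpace ℝ (Fin m)) × ℝ → ℝ) :
    ∀ (y1 : EuclideanSpace ℝ (Fin m)) (t : ℝ),
      (lastDeriv^[k]) f (y1, t) = deriv^[k] (fun u => f (y1, u)) t := by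
  induction k with
  | zero => intro y1 t; rfl
  | succ k ih =>
    intro y1 t
    rw [Function.iterate_succ_apply', Function.iterate_succ_apply']
    show deriv (fun u => (lastDeriv^[k]) f (y1, u)) t = _
    congr 1
    funext u
    exact ih y1 u

lemma lastDeriv_eq_fderiv (f : (EuclideanSpace ℝ (Fin m)) × ℝ → ℝ)
    (hf : Differentiable ℝ f) :
    lastDeriv f = fun y => fderiv ℝ f y ((0 : EuclideanSpace ℝ (Fin m)), (1 : ℝ)) := by
  funext y
  have hι : HasDerivAt (fun t : ℝ => (y.1, t)) ((0 : EuclideanSpace ℝ (Fin m)), (1 : ℝ)) y.2 :=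
    (hasDerivAt_const y.2 y.1).prodMk (hasDerivAt_id y.2)
  have hF : HasFDerivAt f (fderiv ℝ f (y.1, y.2)) (y.1, y.2) := (hf (y.1, y.2)).hasFDerivAt
  have := hF.comp_hasDerivAt y.2 hι
  simpa [lastDeriv, Function.comp_def] using this.deriv

lemma support_lastDeriv (f : (EuclideanSpace ℝ (Fin m)) × ℝ → ℝ) :
    Function.support (lastDeriv f) ⊆ tsupport f := by
  intro y hy
  by_contra hns
  apply hy
  have hopen : IsOpen (tsupport f)ᶜ := (isClosed_tsupport f).isOpen_compl
  have hev : (fun t => f (y.1, t)) =ᶠ[nhds y.2] (fun _ => (0:ℝ)) := by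
    have hc : Continuous (fun t : ℝ => ((y.1, t) : (EuclideanSpace ℝ (Fin m)) × ℝ)) := by
      continuity
    filter_upwards [hc.continuousAt.preimage_mem_nhds (hopen.mem_nhds hns)] with u hu
    exact image_eq_zero_of_notMem_tsupport hu
  show lastDeriv f y = 0
  rw [lastDeriv, hev.deriv_eq, deriv_const]

lemma contDiff_lastDeriv (f : (EuclideanSpace ℝ (Fin m)) × ℝ → ℝ) (hf : ContDiff ℝ ∞ f) :
    ContDiff ℝ ∞ (lastDeriv f) := by
  rw [lastDeriv_eq_fderiv f (hf.differentiable (by simp))]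
  exact (hf.fderiv_right (le_refl _)).clm_apply contDiff_const

lemma lastDeriv_reg (f : (EuclideanSpace ℝ (Fin m)) × ℝ → ℝ) (hf : ContDiff ℝ ∞ f)
    (hK : HasCompactSupport f) (k : ℕ) :
    ContDiff ℝ ∞ ((lastDeriv^[k]) f) ∧ tsupport ((lastDeriv^[k]) f) ⊆ tsupport f ∧
      HasCompactSupport ((lastDeriv^[k]) f) := by
  induction k with
  | zero => exact ⟨hf, subset_rfl, hK⟩
  | succ k ih =>
    obtain ⟨h1, h2, h3⟩ := ih
    rw [Function.iterate_succ_apply']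
    refine ⟨contDiff_lastDeriv _ h1, ?_, ?_⟩
    · refine subset_trans ?_ h2
      exact closure_minimal (subset_trans (support_lastDeriv _) subset_rfl)
        (isClosed_tsupport _)
    · exact h3.mono' (support_lastDeriv _)

lemma slice_hcs (F : (EuclideanSpace ℝ (Fin m)) × ℝ → ℝ) (hF : HasCompactSupport F)
    (y1 : EuclideanSpace ℝ (Fin m)) : HasCompactSupport (fun t => F (y1, t)) := by
  have himg : IsCompact (Prod.snd '' (tsupport F)) := hF.image continuous_snd
  apply IsCompact.of_isClosed_subset himg isClosed_closure
  apply closure_minimal _ himg.isClosed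
  intro t ht
  exact ⟨(y1, t), subset_closure ht, rfl⟩

end TwoD

end Auxiliary

section Main
open Set ContDiff

set_option maxHeartbeats 2000000 in
/-- Local-patch collar estimate.  Write `d = m + 1 ≥ 1` and points of
`ℝ^d = ℝ^{d-1} × ℝ` as `y = (y', y_d)`.  Let `Q = (-c₀/2, c₀/2)^d`, and for a Lipschitz
`φ : ℝ^{d-1} → [-c₀, c₀]` let `U_φ = {y ∈ Q : φ(y') < y_d}` and
`V_φ(ε) = {y ∈ Q : φ(y') ≤ y_d ≤ φ(y') + ε}`.  There is a constant `C` depending only on `s`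
such that every smooth `f` compactly supported in `U_φ` and every `0 < ε < c₀` satisfy
`∫_{V_φ(ε)} f² ≤ C ε^{2s} ∫ |∂_d^s f|²`. -/
theorem collar_estimate (s : ℕ) (hs : 1 ≤ s) :
    ∃ C > 0, ∀ (m : ℕ) (c0 : ℝ), 0 < c0 →
      ∀ (φ : EuclideanSpace ℝ (Fin m) → ℝ) (Kφ : NNReal), LipschitzWith Kφ φ →
        (∀ y', |φ y'| ≤ c0) →
        ∀ f : (EuclideanSpace ℝ (Fin m)) × ℝ → ℝ,
          ContDiff ℝ (⊤ : ℕ∞) f →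
          HasCompactSupport f →
          tsupport f ⊆ {y : (EuclideanSpace ℝ (Fin m)) × ℝ |
              ((∀ i, |y.1 i| < c0 / 2) ∧ |y.2| < c0 / 2) ∧ φ y.1 < y.2} →
          ∀ ε : ℝ, 0 < ε → ε < c0 →
            (∫ y in {y : (EuclideanSpace ℝ (Fin m)) × ℝ |
                ((∀ i, |y.1 i| < c0 / 2) ∧ |y.2| < c0 / 2) ∧
                  φ y.1 ≤ y.2 ∧ y.2 ≤ φ y.1 + ε}, (f y) ^ 2)
              ≤ C * ε ^ (2 * s) * ∫ y, ((lastDeriv^[s]) f y) ^ 2 := by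
  refine ⟨1, one_pos, ?_⟩
  intro m c0 hc0 φ Kφ hφL hφb f hf hKf hsupp ε hε hεc
  rw [one_mul]
  have hf' : ContDiff ℝ ∞ f := hf.of_le (by simp)
  obtain ⟨hFsm, hFsupp, hFc⟩ := lastDeriv_reg f hf' hKf s
  have hφc : Continuous φ := hφL.continuous
  -- integrability facts
  have hf2c : Continuous (fun y : (EuclideanSpace ℝ (Fin m)) × ℝ => (f y)^2) :=
    (hf'.continuous).pow 2
  have hf2hc : HasCompactSupport (fun y : (EuclideanSpace ℝ (Fin m)) × ℝ => (f y)^2) := by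
    apply hKf.mono'
    intro y hy
    apply subset_closure
    intro h0
    simp [Function.mem_support, h0] at hy
  have hf2int : Integrable (fun y : (EuclideanSpace ℝ (Fin m)) × ℝ => (f y)^2) :=
    hf2c.integrable_of_hasCompactSupport hf2hc
  have hF2c : Continuous (fun y : (EuclideanSpace ℝ (Fin m)) × ℝ => ((lastDeriv^[s]) f y)^2) :=
    (hFsm.continuous).pow 2
  have hF2hc : HasCompactSupport
      (fun y : (EuclideanSpace ℝ (Fin m)) × ℝ => ((lastDeriv^[s]) f y)^2) := by
    apply hFc.mono'
    intro y hy
    apply subset_closure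
    intro h0
    simp [Function.mem_support, h0] at hy
  have hF2int : Integrable (fun y : (EuclideanSpace ℝ (Fin m)) × ℝ => ((lastDeriv^[s]) f y)^2) :=
    hF2c.integrable_of_hasCompactSupport hF2hc
  -- the bigger collar set
  set B : Set ((EuclideanSpace ℝ (Fin m)) × ℝ) :=
    {y | φ y.1 ≤ y.2 ∧ y.2 ≤ φ y.1 + ε} with hBdef
  have hBmeas : MeasurableSet B := by
    apply MeasurableSet.inter
    · exact measurableSet_le (hφc.comp continuous_fst).measurable continuous_snd.measurable
    · exact measurableSet_le continuous_snd.measurable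
        ((hφc.comp continuous_fst).measurable.add_const ε)
  -- step 1 : enlarge the integration set
  have hsubB : {y : (EuclideanSpace ℝ (Fin m)) × ℝ |
      ((∀ i, |y.1 i| < c0 / 2) ∧ |y.2| < c0 / 2) ∧ φ y.1 ≤ y.2 ∧ y.2 ≤ φ y.1 + ε} ⊆ B :=
    fun y hy => hy.2
  have step1 : (∫ y in {y : (EuclideanSpace ℝ (Fin m)) × ℝ |
      ((∀ i, |y.1 i| < c0 / 2) ∧ |y.2| < c0 / 2) ∧ φ y.1 ≤ y.2 ∧ y.2 ≤ φ y.1 + ε}, (f y) ^ 2)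
      ≤ ∫ y in B, (f y)^2 := by
    apply setIntegral_mono_set hf2int.integrableOn
    · exact Filter.Eventually.of_forall fun y => sq_nonneg _
    · exact hsubB.eventuallyLE
  -- indicator form
  have hGint : Integrable (Set.indicator B (fun y => (f y)^2)) := hf2int.indicator hBmeas
  have step2 : ∫ y in B, (f y)^2 = ∫ y, Set.indicator B (fun y => (f y)^2) y :=
    (integral_indicator hBmeas).symm
  -- Fubini
  have hvol : (volume : Measure ((EuclideanSpace ℝ (Fin m)) × ℝ)) =
      (volume : Measure (EuclideanSpace ℝ (Fin m))).prod (volume : Measure ℝ) :=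
    MeasureTheory.Measure.volume_eq_prod _ _
  have hGint' : Integrable (Set.indicator B (fun y => (f y)^2))
      ((volume : Measure (EuclideanSpace ℝ (Fin m))).prod (volume : Measure ℝ)) :=
    hvol ▸ hGint
  have hF2int' : Integrable (fun y : (EuclideanSpace ℝ (Fin m)) × ℝ => ((lastDeriv^[s]) f y)^2)
      ((volume : Measure (EuclideanSpace ℝ (Fin m))).prod (volume : Measure ℝ)) :=
    hvol ▸ hF2int
  have step3 : ∫ y, Set.indicator B (fun y => (f y)^2) y
      = ∫ y1, ∫ t, Set.indicator B (fun y => (f y)^2) (y1, t) := by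
    rw [hvol, ← MeasureTheory.integral_prod _ hGint']
  -- inner slice estimate
  have inner_bound : ∀ y1 : EuclideanSpace ℝ (Fin m),
      ∫ t, Set.indicator B (fun y => (f y)^2) (y1, t)
        ≤ ε^(2*s) * ∫ t, ((lastDeriv^[s]) f (y1, t))^2 := by
    intro y1
    have hslice_eq : (fun t => Set.indicator B (fun y => (f y)^2) (y1, t)) =
        Set.indicator (Icc (φ y1) (φ y1 + ε)) (fun t => (f (y1, t))^2) := by
      funext t
      by_cases h : (y1, t) ∈ B
      · rw [Set.indicator_of_mem h, Set.indicator_of_mem]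
        exact ⟨h.1, h.2⟩
      · rw [Set.indicator_of_notMem h, Set.indicator_of_notMem]
        intro ht
        exact h ⟨ht.1, ht.2⟩
    have h0 : ∀ t ≤ φ y1, f (y1, t) = 0 := by
      intro t ht
      apply image_eq_zero_of_notMem_tsupport
      intro hmem
      exact absurd (hsupp hmem).2 (not_lt.2 ht)
    have hpair : ContDiff ℝ ∞ (fun t : ℝ => ((y1, t) : (EuclideanSpace ℝ (Fin m)) × ℝ)) :=
      contDiff_const.prodMk contDiff_id
    have hgc : ContDiff ℝ ∞ (fun t : ℝ => f (y1, t)) := hf'.comp hpair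
    have hone := one_dim s (fun t => f (y1, t)) hgc (φ y1) ε hε.le h0
    have hFs2slice : Integrable (fun t => ((lastDeriv^[s]) f (y1, t))^2) := by
      have hc : Continuous (fun t => ((lastDeriv^[s]) f (y1, t))^2) :=
        hF2c.comp (by continuity :
          Continuous fun t : ℝ => ((y1, t) : (EuclideanSpace ℝ (Fin m)) × ℝ))
      exact hc.integrable_of_hasCompactSupport
        (slice_hcs (fun y => ((lastDeriv^[s]) f y)^2) hF2hc y1)
    calc ∫ t, Set.indicator B (fun y => (f y)^2) (y1, t)
        = ∫ t in Icc (φ y1) (φ y1 + ε), (f (y1, t))^2 := by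
          rw [hslice_eq, integral_indicator measurableSet_Icc]
      _ = ∫ t in Ioc (φ y1) (φ y1 + ε), (f (y1, t))^2 := integral_Icc_eq_integral_Ioc
      _ ≤ ε^(2*s) * ∫ t in Ioc (φ y1) (φ y1 + ε), (deriv^[s] (fun u => f (y1, u)) t)^2 := hone
      _ = ε^(2*s) * ∫ t in Ioc (φ y1) (φ y1 + ε), ((lastDeriv^[s]) f (y1, t))^2 := by
          congr 1
          apply setIntegral_congr_fun measurableSet_Ioc
          intro t _
          simp only [lastDeriv_slice s f]
      _ ≤ ε^(2*s) * ∫ t, ((lastDeriv^[s]) f (y1, t))^2 := by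
          apply mul_le_mul_of_nonneg_left _ (pow_nonneg hε.le _)
          exact setIntegral_le_integral hFs2slice
            (Filter.Eventually.of_forall fun t => sq_nonneg _)
  -- integrate in y1
  have hRHSint : Integrable
      (fun y1 : EuclideanSpace ℝ (Fin m) => ε^(2*s) * ∫ t, ((lastDeriv^[s]) f (y1, t))^2) :=
    (hF2int'.integral_prod_left).const_mul _
  have step4 : ∫ y1, ∫ t, Set.indicator B (fun y => (f y)^2) (y1, t)
      ≤ ∫ y1, ε^(2*s) * ∫ t, ((lastDeriv^[s]) f (y1, t))^2 := by
    apply integral_mono_of_nonneg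
    · exact Filter.Eventually.of_forall fun y1 => integral_nonneg fun t =>
        Set.indicator_nonneg (fun y _ => sq_nonneg _) _
    · exact hRHSint
    · exact Filter.Eventually.of_forall inner_bound
  have step5 : (∫ y1, ε^(2*s) * ∫ t, ((lastDeriv^[s]) f (y1, t))^2)
      = ε^(2*s) * ∫ y, ((lastDeriv^[s]) f y)^2 := by
    rw [integral_const_mul]
    congr 1
    rw [hvol, ← MeasureTheory.integral_prod _ hF2int']
  linarith [step1, step2.le, step3.le, step4, step5.le]

end Main
end

section
/- Let X, X_1, …, X_n be i.i.d. random variables with distribution P on a measurable space, and let f be a measurable real-valued function with 0 < E[f(X)²] and E[f(X)⁴] < ∞. Then with probability at least 1 − exp( −(n/8) · (E[f(X)²])² / E[f(X)⁴] ), the empirical second moment satisfies (1/n) ∑_{i=1}^n f(X_i)² ≥ (1/2) E[f(X)²]. -/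
open MeasureTheory ProbabilityTheory

lemma exp_neg_quad_bound {x : ℝ} (hx : 0 ≤ x) :
    Real.exp (-x) ≤ 1 - x + x ^ 2 / 2 := by
  have key : MonotoneOn (fun y : ℝ => 1 - y + y ^ 2 / 2 - Real.exp (-y)) (Set.Ici 0) := by
    have hderiv : ∀ y : ℝ, HasDerivAt (fun y : ℝ => 1 - y + y ^ 2 / 2 - Real.exp (-y))
        (-1 + y + Real.exp (-y)) y := by
      intro y
      have h1 : HasDerivAt (fun y : ℝ => 1 - y + y ^ 2 / 2) (-1 + y) y := by
        have := ((hasDerivAt_id y).const_sub 1).add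
          (((hasDerivAt_pow 2 y)).div_const 2)
        exact this.congr_deriv (by simp only [Nat.cast_ofNat, Nat.reduceSub, pow_one]; ring)
      have h2 : HasDerivAt (fun y : ℝ => Real.exp (-y)) (-Real.exp (-y)) y := by
        have := (Real.hasDerivAt_exp (-y)).comp y ((hasDerivAt_id y).neg)
        simpa [Function.comp_def] using this
      exact (h1.sub h2).congr_deriv (by ring)
    apply monotoneOn_of_deriv_nonneg (convex_Ici 0)
    · exact (Continuous.continuousOn (by continuity))
    · intro y hy
      exact (hderiv y).differentiableAt.differentiableWithinAt
    · intro y hy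
      rw [(hderiv y).deriv]
      have := Real.add_one_le_exp (-y)
      linarith
  have h0 : (fun y : ℝ => 1 - y + y ^ 2 / 2 - Real.exp (-y)) 0 = 0 := by simp
  have := key (Set.self_mem_Ici) (Set.mem_Ici.mpr hx) hx
  rw [h0] at this
  linarith [this]

lemma exp_mul_le_quad {t y : ℝ} (ht : t ≤ 0) (hy : 0 ≤ y) :
    Real.exp (t * y) ≤ 1 + t * y + t ^ 2 * y ^ 2 / 2 := by
  have hxy : 0 ≤ -(t * y) := by nlinarith
  have := exp_neg_quad_bound hxy
  rw [neg_neg] at this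
  nlinarith [this]

lemma integrable_exp_nonpos {Ω : Type*} [MeasurableSpace Ω] (P : Measure Ω)
    [IsProbabilityMeasure P] {Z : Ω → ℝ} (hZ : Measurable Z) (hZ0 : ∀ ω, 0 ≤ Z ω)
    {t : ℝ} (ht : t ≤ 0) : Integrable (fun ω => Real.exp (t * Z ω)) P := by
  refine (integrable_const 1).mono' ((hZ.const_mul t).exp.aestronglyMeasurable)
    (ae_of_all _ fun ω => ?_)
  rw [Real.norm_eq_abs, abs_of_nonneg (Real.exp_pos _).le]
  exact Real.exp_le_one_iff.mpr (mul_nonpos_of_nonpos_of_nonneg ht (hZ0 ω))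

/-- One-sided Bernstein inequality.  If `X, X₁,…,Xₙ` are i.i.d. with law `μ` and
`f` is measurable with `0 < E[f(X)²]` and `E[f(X)⁴] < ∞`, then with probability at least
`1 - exp(-(n/8)·(E[f(X)²])²/E[f(X)⁴])` the empirical second moment satisfies
`(1/n) ∑ᵢ f(Xᵢ)² ≥ (1/2) E[f(X)²]`. -/
theorem one_sided_bernstein
    (α : Type*) [MeasurableSpace α] (μ : Measure α) [IsProbabilityMeasure μ]
    (n : ℕ) (hn : 1 ≤ n)
    (Ω : Type*) [MeasurableSpace Ω] (P : Measure Ω) [IsProbabilityMeasure P]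
    (X : Fin n → Ω → α) (hXm : ∀ i, Measurable (X i))
    (hXindep : iIndepFun X P)
    (hXlaw : ∀ i, P.map (X i) = μ)
    (f : α → ℝ) (hfm : Measurable f)
    (hf2 : 0 < ∫ x, (f x) ^ 2 ∂μ)
    (hf4 : Integrable (fun x => (f x) ^ 4) μ) :
    1 - Real.exp (-((n : ℝ) / 8) * (∫ x, (f x) ^ 2 ∂μ) ^ 2 / ∫ x, (f x) ^ 4 ∂μ)
      ≤ (P {ω | (1 / 2) * ∫ x, (f x) ^ 2 ∂μ
            ≤ (1 / (n : ℝ)) * ∑ i, (f (X i ω)) ^ 2}).toReal := by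
  set m := ∫ x, (f x) ^ 2 ∂μ with hm
  set M := ∫ x, (f x) ^ 4 ∂μ with hMdef
  have hg_meas : Measurable (fun a => (f a) ^ 2) := hfm.pow_const 2
  have hf2_int : Integrable (fun x => (f x) ^ 2) μ := by
    refine (hf4.add (integrable_const 1)).mono' hg_meas.aestronglyMeasurable
      (ae_of_all _ fun x => ?_)
    rw [Real.norm_eq_abs, abs_of_nonneg (sq_nonneg _)]
    simp only [Pi.add_apply]
    nlinarith [sq_nonneg ((f x) ^ 2 - 1)]
  have hM_nonneg : 0 ≤ M := integral_nonneg fun x => by positivity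
  have hM_pos : 0 < M := by
    rcases hM_nonneg.lt_or_eq with h | h
    · exact h
    · exfalso
      have h4 := (integral_eq_zero_iff_of_nonneg (fun x => by positivity) hf4).mp h.symm
      have h2 : (fun x => (f x) ^ 2) =ᵐ[μ] 0 := by
        filter_upwards [h4] with x hx
        have : f x = 0 := by
          have : (f x) ^ 4 = 0 := hx
          exact pow_eq_zero_iff (by norm_num) |>.mp this
        simp [this]
      have : m = 0 := by rw [hm, integral_congr_ae h2]; simp
      linarith
  set t : ℝ := -(m / (2 * M)) with ht_def
  have ht : t ≤ 0 := by
    rw [ht_def]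
    have : 0 ≤ m / (2 * M) := div_nonneg hf2.le (by linarith)
    linarith
  set Y : Fin n → Ω → ℝ := fun i ω => (f (X i ω)) ^ 2 with hY_def
  have hY_meas : ∀ i, Measurable (Y i) := fun i => hg_meas.comp (hXm i)
  have hY_nonneg : ∀ i ω, 0 ≤ Y i ω := fun i ω => sq_nonneg _
  have hY_indep : iIndepFun Y P :=
    hXindep.comp (fun _ a => (f a) ^ 2) (fun _ => hg_meas)
  -- per-sample mgf bound
  have hmgf_bound : ∀ i, mgf (Y i) P t ≤ Real.exp (t * m + t ^ 2 * M / 2) := by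
    intro i
    have hmap : mgf (Y i) P t = ∫ a, Real.exp (t * (f a) ^ 2) ∂μ := by
      rw [mgf, ← hXlaw i, integral_map (hXm i).aemeasurable
        ((hg_meas.const_mul t).exp.aestronglyMeasurable)]
    rw [hmap]
    have step1 : ∫ a, Real.exp (t * (f a) ^ 2) ∂μ
        ≤ ∫ a, (1 + t * (f a) ^ 2 + t ^ 2 * (f a) ^ 4 / 2) ∂μ := by
      refine integral_mono (integrable_exp_nonpos μ hg_meas (fun a => sq_nonneg _) ht)
        ?_ fun a => ?_
      · exact ((integrable_const 1).add (hf2_int.const_mul t)).add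
          ((hf4.const_mul (t ^ 2)).div_const 2)
      · have := exp_mul_le_quad ht (sq_nonneg (f a))
        calc Real.exp (t * (f a) ^ 2) ≤ 1 + t * (f a) ^ 2 + t ^ 2 * ((f a) ^ 2) ^ 2 / 2 := this
          _ = 1 + t * (f a) ^ 2 + t ^ 2 * (f a) ^ 4 / 2 := by ring
    have hint1 : Integrable (fun a => t * (f a) ^ 2) μ := hf2_int.const_mul t
    have hint2 : Integrable (fun a => t ^ 2 * (f a) ^ 4 / 2) μ :=
      (hf4.const_mul (t ^ 2)).div_const 2
    have hint3 : Integrable (fun a => 1 + t * (f a) ^ 2) μ := (integrable_const 1).add hint1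
    have step2 : ∫ a, (1 + t * (f a) ^ 2 + t ^ 2 * (f a) ^ 4 / 2) ∂μ
        = 1 + t * m + t ^ 2 * M / 2 := by
      rw [integral_add hint3 hint2, integral_add (integrable_const 1) hint1,
        integral_const, integral_div, integral_const_mul, integral_const_mul]
      simp [hm, hMdef]
    have step3 : (1 : ℝ) + (t * m + t ^ 2 * M / 2) ≤ Real.exp (t * m + t ^ 2 * M / 2) := by
      linarith [Real.add_one_le_exp (t * m + t ^ 2 * M / 2)]
    calc ∫ a, Real.exp (t * (f a) ^ 2) ∂μ ≤ 1 + t * m + t ^ 2 * M / 2 := step1.trans step2.le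
      _ ≤ Real.exp (t * m + t ^ 2 * M / 2) := by linarith
  -- Chernoff
  have hS_meas : Measurable (∑ i, Y i) := by
    have heq : (∑ i, Y i) = fun ω => ∑ i, Y i ω := by
      funext ω; simp [Finset.sum_apply]
    rw [heq]
    exact Finset.measurable_sum _ fun i _ => hY_meas i
  have hS_nonneg : ∀ ω, 0 ≤ (∑ i, Y i) ω := by
    intro ω
    rw [Finset.sum_apply]
    exact Finset.sum_nonneg fun i _ => hY_nonneg i ω
  have hchern : (P {ω | (∑ i, Y i) ω ≤ (n : ℝ) * m / 2}).toReal
      ≤ Real.exp (-t * ((n : ℝ) * m / 2)) * mgf (∑ i, Y i) P t :=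
    measure_le_le_exp_mul_mgf _ ht (integrable_exp_nonpos P hS_meas hS_nonneg ht)
  have hmgf_sum : mgf (∑ i, Y i) P t = ∏ i, mgf (Y i) P t :=
    hY_indep.mgf_sum hY_meas Finset.univ
  have hmgf_prod_le : ∏ i : Fin n, mgf (Y i) P t
      ≤ Real.exp ((n : ℝ) * (t * m + t ^ 2 * M / 2)) := by
    calc ∏ i : Fin n, mgf (Y i) P t
        ≤ ∏ _i : Fin n, Real.exp (t * m + t ^ 2 * M / 2) :=
          Finset.prod_le_prod (fun i _ => mgf_nonneg) (fun i _ => hmgf_bound i)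
      _ = Real.exp ((n : ℝ) * (t * m + t ^ 2 * M / 2)) := by
          rw [Finset.prod_const, ← Real.exp_nat_mul]
          simp
  have hfinal_exp : Real.exp (-t * ((n : ℝ) * m / 2)) *
      Real.exp ((n : ℝ) * (t * m + t ^ 2 * M / 2))
      = Real.exp (-((n : ℝ) / 8) * m ^ 2 / M) := by
    rw [← Real.exp_add]
    congr 1
    rw [ht_def]
    field_simp
    ring
  have hbound : (P {ω | (∑ i, Y i) ω ≤ (n : ℝ) * m / 2}).toReal
      ≤ Real.exp (-((n : ℝ) / 8) * m ^ 2 / M) := by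
    calc (P {ω | (∑ i, Y i) ω ≤ (n : ℝ) * m / 2}).toReal
        ≤ Real.exp (-t * ((n : ℝ) * m / 2)) * mgf (∑ i, Y i) P t := hchern
      _ ≤ Real.exp (-t * ((n : ℝ) * m / 2)) *
          Real.exp ((n : ℝ) * (t * m + t ^ 2 * M / 2)) := by
          rw [hmgf_sum]
          exact mul_le_mul_of_nonneg_left hmgf_prod_le (Real.exp_pos _).le
      _ = Real.exp (-((n : ℝ) / 8) * m ^ 2 / M) := hfinal_exp
  -- event algebra
  set A : Set Ω := {ω | (1 / 2) * m ≤ (1 / (n : ℝ)) * ∑ i, (f (X i ω)) ^ 2} with hA_def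
  have hn_pos : (0 : ℝ) < n := by exact_mod_cast hn
  have hA_meas : MeasurableSet A := by
    apply measurableSet_le measurable_const
    exact Measurable.const_mul (by
      apply Finset.measurable_sum
      exact fun i _ => (hg_meas.comp (hXm i))) _
  have hsub : Aᶜ ⊆ {ω | (∑ i, Y i) ω ≤ (n : ℝ) * m / 2} := by
    intro ω hω
    simp only [Set.mem_compl_iff, hA_def, Set.mem_setOf_eq, not_le] at hω
    simp only [Set.mem_setOf_eq, Finset.sum_apply]
    have : (1 / (n : ℝ)) * ∑ i, (f (X i ω)) ^ 2 < (1 / 2) * m := hω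
    have h2 : ∑ i, (f (X i ω)) ^ 2 < (n : ℝ) * m / 2 := by
      rw [one_div, inv_mul_lt_iff₀ hn_pos] at this
      linarith [this]
    exact le_of_lt h2
  have hcompl : (P Aᶜ).toReal ≤ Real.exp (-((n : ℝ) / 8) * m ^ 2 / M) := by
    refine le_trans ?_ hbound
    exact ENNReal.toReal_mono (measure_ne_top _ _) (measure_mono hsub)
  have hPA : (P A).toReal = 1 - (P Aᶜ).toReal := by
    have h1 : P Aᶜ = 1 - P A := prob_compl_eq_one_sub hA_meas
    have h2 : (P Aᶜ).toReal = 1 - (P A).toReal := by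
      rw [h1, ENNReal.toReal_sub_of_le prob_le_one (by simp)]
      simp
    linarith
  rw [hPA]
  linarith [hcompl]
end

section
/- Let X_1, …, X_n be i.i.d. random variables with distribution P, let m ≥ 1 be an integer, and let A_1, …, A_{2m} be measurable sets each satisfying P(A_j) ≥ 1/(2m). Then the probability that every set A_j contains at least one sample point, i.e. P( for all j ∈ {1,…,2m} there exists i ∈ {1,…,n} with X_i ∈ A_j ), is at least 1 − 2m·exp(−n/(2m)). -/
open MeasureTheory ProbabilityTheory

/-- Balls in bins.  If `X₁,…,Xₙ` are i.i.d. with law `μ` and `A₁,…,A_{2m}` are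
measurable sets each of probability at least `1/(2m)`, then the probability that every set
contains at least one sample point is at least `1 - 2m·exp(-n/(2m))`. -/
theorem balls_in_bins
    (α : Type*) [MeasurableSpace α] (μ : Measure α) [IsProbabilityMeasure μ]
    (n m : ℕ) (hm : 1 ≤ m)
    (Ω : Type*) [MeasurableSpace Ω] (P : Measure Ω) [IsProbabilityMeasure P]
    (X : Fin n → Ω → α) (hXm : ∀ i, Measurable (X i))
    (hXindep : iIndepFun X P)
    (hXlaw : ∀ i, P.map (X i) = μ)
    (A : Fin (2 * m) → Set α) (hA : ∀ j, MeasurableSet (A j))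
    (hAP : ∀ j, 1 / (2 * (m : ℝ)) ≤ (μ (A j)).toReal) :
    1 - 2 * m * Real.exp (-(n : ℝ) / (2 * m))
      ≤ (P {ω | ∀ j, ∃ i, X i ω ∈ A j}).toReal := by
  have hm0 : (0:ℝ) < 2 * (m:ℝ) := by positivity
  set B : Fin (2 * m) → Set Ω := fun j => ⋂ i, X i ⁻¹' (A j)ᶜ with hB
  have hBmeas : ∀ j, MeasurableSet (B j) := fun j =>
    MeasurableSet.iInter fun i => (hXm i) (hA j).compl
  -- bound for each bad event
  have hBj : ∀ j, (P (B j)).toReal ≤ Real.exp (-(n : ℝ) / (2 * m)) := by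
    intro j
    have hmeas : P (B j) = ∏ i, P (X i ⁻¹' (A j)ᶜ) :=
      hXindep.meas_iInter fun i => ⟨(A j)ᶜ, (hA j).compl, rfl⟩
    have hfac : ∀ i : Fin n, (P (X i ⁻¹' (A j)ᶜ)).toReal = 1 - (μ (A j)).toReal := by
      intro i
      have : P (X i ⁻¹' (A j)ᶜ) = μ ((A j)ᶜ) := by
        rw [← hXlaw i, Measure.map_apply (hXm i) (hA j).compl]
      rw [this, prob_compl_eq_one_sub (hA j), ENNReal.toReal_sub_of_le (prob_le_one)
        (by simp), ENNReal.toReal_one]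
    have hexp : 1 - (μ (A j)).toReal ≤ Real.exp (-(1 / (2 * (m:ℝ)))) := by
      have h1 : 1 - (μ (A j)).toReal ≤ 1 - 1 / (2 * (m:ℝ)) := by linarith [hAP j]
      have h2 := Real.add_one_le_exp (-(1 / (2 * (m:ℝ))))
      linarith
    calc (P (B j)).toReal = ∏ i : Fin n, (P (X i ⁻¹' (A j)ᶜ)).toReal := by
          rw [hmeas, ENNReal.toReal_prod]
      _ = (1 - (μ (A j)).toReal) ^ n := by
          rw [Finset.prod_congr rfl fun i _ => hfac i, Finset.prod_const, Finset.card_univ,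
            Fintype.card_fin]
      _ ≤ (Real.exp (-(1 / (2 * (m:ℝ))))) ^ n := by
          apply pow_le_pow_left₀ _ hexp
          have := prob_le_one (μ := μ) (s := A j)
          have h1 : (μ (A j)).toReal ≤ 1 := by
            simpa using ENNReal.toReal_mono (by simp) this
          linarith
      _ = Real.exp (-(n : ℝ) / (2 * m)) := by
          rw [← Real.exp_nat_mul]; ring_nf
  -- the good event is the complement of the union of bad events
  have hset : {ω | ∀ j, ∃ i, X i ω ∈ A j} = (⋃ j, B j)ᶜ := by
    ext ω
    simp [hB, Set.mem_iInter, not_forall, not_exists]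
  have hUmeas : MeasurableSet (⋃ j, B j) := MeasurableSet.iUnion hBmeas
  have hUnion : (P (⋃ j, B j)).toReal ≤ 2 * m * Real.exp (-(n : ℝ) / (2 * m)) := by
    have hle : P (⋃ j, B j) ≤ ∑ j, P (B j) := measure_iUnion_fintype_le _ _
    have h1 : (P (⋃ j, B j)).toReal ≤ ∑ j, (P (B j)).toReal := by
      rw [← ENNReal.toReal_sum (fun j _ => measure_ne_top P _)]
      exact ENNReal.toReal_mono (by
        simp [measure_ne_top]) hle
    refine h1.trans ?_
    calc ∑ j, (P (B j)).toReal ≤ ∑ _j : Fin (2*m), Real.exp (-(n : ℝ) / (2 * m)) :=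
          Finset.sum_le_sum fun j _ => hBj j
      _ = 2 * m * Real.exp (-(n : ℝ) / (2 * m)) := by
          simp [Finset.sum_const]
  rw [hset, prob_compl_eq_one_sub hUmeas, ENNReal.toReal_sub_of_le (prob_le_one) (by simp),
    ENNReal.toReal_one]
  linarith
end

section
/- Let 0 < r ≤ (1 − 2^{−1/2})/2. Then for every integer k ≥ 1, (1 − ⟨ψ_k, ψ_k⟩_r)² ≤ 32 r². -/
open MeasureTheory

/-- The Neumann cosine basis on `[0,1]`: `ψ₀ = 1` and `ψ_k(x) = √2 cos(kπx)` for `k ≥ 1`. -/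
noncomputable def psi (k : ℕ) : ℝ → ℝ :=
  if k = 0 then fun _ => 1 else fun x => Real.sqrt 2 * Real.cos (k * Real.pi * x)

/-- The two-cluster inner product
`⟨f,g⟩_r = (1/(1-2r)) (∫_{Q₁} f g + ∫_{Q₂} f g)` with `Q₁ = [0, 1/2 - r]`,
`Q₂ = [1/2 + r, 1]`. -/
noncomputable def ipr (r : ℝ) (f g : ℝ → ℝ) : ℝ :=
  (1 / (1 - 2 * r)) *
    ((∫ x in Set.Icc (0 : ℝ) (1 / 2 - r), f x * g x) +
      (∫ x in Set.Icc (1 / 2 + r) (1 : ℝ), f x * g x))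

open Real in
lemma psi_sq_integral (k : ℕ) (hk : 1 ≤ k) (a b : ℝ) :
    ∫ x in a..b, psi k x * psi k x
      = (b - a) + (Real.sin (2 * k * π * b) - Real.sin (2 * k * π * a)) / (2 * k * π) := by
  have hk0 : k ≠ 0 := Nat.one_le_iff_ne_zero.mp hk
  have hc : (2 * (k : ℝ) * π) ≠ 0 := by positivity
  have h1 : ∀ x : ℝ, psi k x * psi k x = 1 + Real.cos (2 * k * π * x) := by
    intro x
    simp only [psi, if_neg hk0]
    have : Real.sqrt 2 * Real.cos (k * π * x) * (Real.sqrt 2 * Real.cos (k * π * x))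
        = 2 * Real.cos (k * π * x) ^ 2 := by
      rw [show Real.sqrt 2 * Real.cos (k * π * x) * (Real.sqrt 2 * Real.cos (k * π * x))
          = (Real.sqrt 2 * Real.sqrt 2) * Real.cos (k * π * x) ^ 2 by ring,
        Real.mul_self_sqrt (by norm_num)]
    rw [this, Real.cos_sq]
    ring_nf
  simp only [h1]
  rw [intervalIntegral.integral_add intervalIntegrable_const
      (by apply Continuous.intervalIntegrable; continuity)]
  have h2 : ∀ x : ℝ, Real.cos (2 * k * π * x) = Real.cos ((2 * k * π) * x) := fun x => by ring_nf
  have h3 : ∫ x in a..b, Real.cos (2 * k * π * x)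
      = (2 * (k : ℝ) * π)⁻¹ • ∫ x in (2 * k * π) * a..(2 * k * π) * b, Real.cos x := by
    rw [← intervalIntegral.integral_comp_mul_left Real.cos hc]
  rw [h3, integral_cos]
  simp only [intervalIntegral.integral_const, smul_eq_mul, mul_one]
  field_simp

/-- If `0 < r ≤ (1 - 2^{-1/2})/2`, then for every integer `k ≥ 1`,
`(1 - ⟨ψ_k, ψ_k⟩_r)² ≤ 32 r²`. -/
theorem gram_diagonal_bound
    (r : ℝ) (hr0 : 0 < r) (hr1 : r ≤ (1 - (Real.sqrt 2)⁻¹) / 2) :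
    ∀ k : ℕ, 1 ≤ k → (1 - ipr r (psi k) (psi k)) ^ 2 ≤ 32 * r ^ 2 := by
  intro k hk
  have hReal.pi := Real.pi_pos
  have hk0 : (0:ℝ) < k := by exact_mod_cast Nat.pos_of_ne_zero (Nat.one_le_iff_ne_zero.mp hk)
  have hs2 : (Real.sqrt 2)⁻¹ < 1 := by
    rw [inv_lt_one_iff₀]
    right
    nlinarith [Real.sq_sqrt (show (0:ℝ) ≤ 2 by norm_num), Real.sqrt_nonneg 2]
  have hs2' : (0:ℝ) < (Real.sqrt 2)⁻¹ := by positivity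
  have h2r : 1 - 2 * r > 0 := by nlinarith
  have hle : (1:ℝ)/2 - r ≥ 0 := by nlinarith
  -- convert Icc integrals to interval integrals
  have e1 : (∫ x in Set.Icc (0 : ℝ) (1 / 2 - r), psi k x * psi k x)
      = ∫ x in (0:ℝ)..(1/2 - r), psi k x * psi k x := by
    rw [intervalIntegral.integral_of_le (by linarith), integral_Icc_eq_integral_Ioc]
  have e2 : (∫ x in Set.Icc (1 / 2 + r) (1 : ℝ), psi k x * psi k x)
      = ∫ x in (1/2 + r)..(1:ℝ), psi k x * psi k x := by
    rw [intervalIntegral.integral_of_le (by linarith), integral_Icc_eq_integral_Ioc]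
  have key1 := psi_sq_integral k hk 0 (1/2 - r)
  have key2 := psi_sq_integral k hk (1/2 + r) 1
  -- simplify sines
  have t0 : Real.sin (2 * k * Real.pi * 0) = 0 := by simp
  have t1 : Real.sin (2 * k * Real.pi * 1) = 0 := by
    rw [mul_one, show 2 * (k:ℝ) * Real.pi = ((2*k : ℕ) : ℝ) * Real.pi by push_cast; ring,
      Real.sin_nat_mul_pi]
  have tdiff : Real.sin (2 * k * Real.pi * (1/2 - r)) - Real.sin (2 * k * Real.pi * (1/2 + r))
      = -2 * Real.cos (k * Real.pi) * Real.sin (2 * k * Real.pi * r) := by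
    have hA : 2 * k * Real.pi * (1/2 - r) = k * Real.pi - 2 * k * Real.pi * r := by ring
    have hB : 2 * k * Real.pi * (1/2 + r) = k * Real.pi + 2 * k * Real.pi * r := by ring
    rw [hA, hB, Real.sin_sub, Real.sin_add, Real.sin_nat_mul_pi]
    ring
  -- assemble
  have hval : 1 - ipr r (psi k) (psi k)
      = -(-2 * Real.cos (k * Real.pi) * Real.sin (2 * k * Real.pi * r)) / ((1 - 2*r) * (2 * k * Real.pi)) := by
    rw [ipr, e1, e2, key1, key2, t0, t1, ← tdiff]
    field_simp
    ring
  rw [hval]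
  rw [div_pow]
  have hcos : Real.cos (k * Real.pi) ^ 2 ≤ 1 := Real.cos_sq_le_one _
  have hsin : Real.sin (2 * k * Real.pi * r) ^ 2 ≤ (2 * k * Real.pi * r) ^ 2 := Real.sin_sq_le_sq
  have hden : ((1 - 2*r) * (2 * k * Real.pi)) ^ 2 ≥ (1/2) * (2 * k * Real.pi) ^ 2 := by
    have : (1 - 2*r) ^ 2 ≥ 1/2 := by
      have h12 : 1 - 2*r ≥ (Real.sqrt 2)⁻¹ := by linarith
      have : ((Real.sqrt 2)⁻¹) ^ 2 = 1/2 := by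
        rw [inv_pow, Real.sq_sqrt (by norm_num : (0:ℝ) ≤ 2)]
        norm_num
      nlinarith
    nlinarith [sq_nonneg (2 * (k:ℝ) * Real.pi), sq_nonneg (1 - 2*r)]
  have hnum : (-(-2 * Real.cos (k * Real.pi) * Real.sin (2 * k * Real.pi * r))) ^ 2
      ≤ 4 * (2 * k * Real.pi * r) ^ 2 := by
    have e : (-(-2 * Real.cos (k * Real.pi) * Real.sin (2 * k * Real.pi * r))) ^ 2
        = 4 * Real.cos (k * Real.pi) ^ 2 * Real.sin (2 * k * Real.pi * r) ^ 2 := by ring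
    rw [e]
    have h1 : Real.cos (k * Real.pi) ^ 2 * Real.sin (2 * k * Real.pi * r) ^ 2
        ≤ 1 * Real.sin (2 * k * Real.pi * r) ^ 2 :=
      mul_le_mul_of_nonneg_right hcos (sq_nonneg _)
    linarith
  have hdpos : (0:ℝ) < ((1 - 2*r) * (2 * k * Real.pi)) ^ 2 := by positivity
  rw [div_le_iff₀ hdpos]
  have step1 : 4 * (2 * k * Real.pi * r) ^ 2 ≤ 32 * r ^ 2 * ((1/2) * (2 * k * Real.pi) ^ 2) := by
    have hx : (0:ℝ) ≤ ((k:ℝ) * Real.pi * r) ^ 2 := sq_nonneg _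
    calc 4 * (2 * (k:ℝ) * Real.pi * r) ^ 2 = 16 * ((k:ℝ) * Real.pi * r) ^ 2 := by ring
      _ ≤ 64 * ((k:ℝ) * Real.pi * r) ^ 2 := by linarith
      _ = 32 * r ^ 2 * ((1/2) * (2 * k * Real.pi) ^ 2) := by ring
  have step2 : 32 * r ^ 2 * ((1/2) * (2 * k * Real.pi) ^ 2) ≤ 32 * r ^ 2 * ((1 - 2*r) * (2 * k * Real.pi)) ^ 2 :=
    mul_le_mul_of_nonneg_left hden (by positivity)
  exact le_trans hnum (le_trans step1 step2)
end

section
/- Let 0 < r ≤ (1 − 2^{−1/2})/2. Then for all integers 0 ≤ k < ℓ, (⟨ψ_k, ψ_ℓ⟩_r)² ≤ 64 r². -/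
open MeasureTheory

lemma psi_continuous (k : ℕ) : Continuous (psi k) := by
  unfold psi
  split
  · exact continuous_const
  · exact continuous_const.mul (Real.continuous_cos.comp (continuous_const.mul continuous_id))

lemma psi_abs_le (k : ℕ) (x : ℝ) : |psi k x| ≤ Real.sqrt 2 := by
  unfold psi
  split
  · simp only [abs_one]
    nlinarith [Real.sq_sqrt (by norm_num : (2:ℝ) ≥ 0), Real.sqrt_nonneg 2]
  · rw [abs_mul, abs_of_nonneg (Real.sqrt_nonneg 2)]
    calc Real.sqrt 2 * |Real.cos (k * Real.pi * x)| ≤ Real.sqrt 2 * 1 :=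
          mul_le_mul_of_nonneg_left (Real.abs_cos_le_one _) (Real.sqrt_nonneg 2)
      _ = Real.sqrt 2 := mul_one _

lemma intcos (n : ℕ) (hn : n ≠ 0) :
    ∫ x in (0:ℝ)..1, Real.cos (n * Real.pi * x) = 0 := by
  have hc : (n : ℝ) * Real.pi ≠ 0 :=
    mul_ne_zero (Nat.cast_ne_zero.mpr hn) Real.pi_ne_zero
  have h := intervalIntegral.integral_comp_mul_left (a := (0:ℝ)) (b := 1)
    (fun x => Real.cos x) hc
  simp only [mul_zero, mul_one, smul_eq_mul] at h
  rw [h, integral_cos, Real.sin_nat_mul_pi, Real.sin_zero]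
  ring

lemma psi_orth (k l : ℕ) (hkl : k < l) :
    ∫ x in (0:ℝ)..1, psi k x * psi l x = 0 := by
  have hl : l ≠ 0 := by omega
  rcases Nat.eq_zero_or_pos k with hk | hk
  · subst hk
    have hpt : ∀ x : ℝ, psi 0 x * psi l x = Real.sqrt 2 * Real.cos (l * Real.pi * x) := by
      intro x; simp [psi, hl]
    simp only [hpt]
    rw [intervalIntegral.integral_const_mul, intcos l (by omega)]
    ring
  · have hk' : k ≠ 0 := by omega
    simp only [psi, if_neg hk', if_neg (by omega : l ≠ 0)]
    have key : ∀ x : ℝ, (Real.sqrt 2 * Real.cos (k * Real.pi * x)) *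
        (Real.sqrt 2 * Real.cos (l * Real.pi * x)) =
        Real.cos (((l - k : ℕ) : ℝ) * Real.pi * x) +
        Real.cos (((l + k : ℕ) : ℝ) * Real.pi * x) := by
      intro x
      have h2 : Real.sqrt 2 * Real.sqrt 2 = 2 := Real.mul_self_sqrt (by norm_num)
      have hsub : ((l - k : ℕ) : ℝ) = (l : ℝ) - k := by
        push_cast [Nat.cast_sub hkl.le]; ring
      have hadd : ((l + k : ℕ) : ℝ) = (l : ℝ) + k := by push_cast; ring
      rw [hsub, hadd]
      have e1 : ((l:ℝ) - k) * Real.pi * x = l * Real.pi * x - k * Real.pi * x := by ring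
      have e2 : ((l:ℝ) + k) * Real.pi * x = l * Real.pi * x + k * Real.pi * x := by ring
      rw [e1, e2, Real.cos_sub, Real.cos_add]
      linear_combination h2 * (Real.cos (k * Real.pi * x) * Real.cos (l * Real.pi * x))
    simp only [key]
    have i1 : IntervalIntegrable (fun x => Real.cos (((l - k : ℕ) : ℝ) * Real.pi * x))
        volume 0 1 :=
      (Real.continuous_cos.comp (continuous_const.mul continuous_id)).intervalIntegrable _ _
    have i2 : IntervalIntegrable (fun x => Real.cos (((l + k : ℕ) : ℝ) * Real.pi * x))
        volume 0 1 :=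
      (Real.continuous_cos.comp (continuous_const.mul continuous_id)).intervalIntegrable _ _
    rw [intervalIntegral.integral_add i1 i2, intcos (l - k) (by omega),
      intcos (l + k) (by omega)]
    ring

/-- If `0 < r ≤ (1 - 2^{-1/2})/2`, then for all integers `0 ≤ k < ℓ`,
`(⟨ψ_k, ψ_ℓ⟩_r)² ≤ 64 r²`. -/
theorem gram_offdiagonal_bound
    (r : ℝ) (hr0 : 0 < r) (hr1 : r ≤ (1 - (Real.sqrt 2)⁻¹) / 2) :
    ∀ k l : ℕ, k < l → (ipr r (psi k) (psi l)) ^ 2 ≤ 64 * r ^ 2 := by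
  have hsqrt2 : Real.sqrt 2 ≤ 2 := by
    nlinarith [Real.sq_sqrt (by norm_num : (2:ℝ) ≥ 0), Real.sqrt_nonneg 2]
  have hsqrt2' : (1:ℝ) ≤ Real.sqrt 2 := by
    nlinarith [Real.sq_sqrt (by norm_num : (2:ℝ) ≥ 0), Real.sqrt_nonneg 2]
  have hinv : (1:ℝ)/2 ≤ (Real.sqrt 2)⁻¹ := by
    rw [le_inv_comm₀ (by norm_num) (by linarith)]
    linarith
  have hr4 : r ≤ 1/4 := by
    have : (1 - (Real.sqrt 2)⁻¹) / 2 ≤ 1/4 := by linarith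
    linarith
  intro k l hkl
  set f : ℝ → ℝ := fun x => psi k x * psi l x with hf
  have hcont : Continuous f := (psi_continuous k).mul (psi_continuous l)
  have hii : ∀ a b : ℝ, IntervalIntegrable f volume a b := fun a b =>
    hcont.intervalIntegrable a b
  have h1 : (0:ℝ) ≤ 1/2 - r := by linarith
  have h2 : (1/2 - r : ℝ) ≤ 1/2 + r := by linarith
  have h3 : (1/2 + r : ℝ) ≤ 1 := by linarith
  -- convert Icc integrals to interval integrals
  have e1 : (∫ x in Set.Icc (0:ℝ) (1/2 - r), f x) = ∫ x in (0:ℝ)..(1/2 - r), f x := by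
    rw [intervalIntegral.integral_of_le h1, integral_Icc_eq_integral_Ioc]
  have e2 : (∫ x in Set.Icc (1/2 + r) (1:ℝ), f x) = ∫ x in (1/2 + r)..(1:ℝ), f x := by
    rw [intervalIntegral.integral_of_le h3, integral_Icc_eq_integral_Ioc]
  have hsplit : (∫ x in (0:ℝ)..(1/2 - r), f x) + (∫ x in (1/2 - r)..(1/2 + r), f x)
      + (∫ x in (1/2 + r)..(1:ℝ), f x) = ∫ x in (0:ℝ)..1, f x := by
    rw [intervalIntegral.integral_add_adjacent_intervals (hii _ _) (hii _ _),
      intervalIntegral.integral_add_adjacent_intervals (hii _ _) (hii _ _)]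
  have horth : (∫ x in (0:ℝ)..1, f x) = 0 := psi_orth k l hkl
  -- bound the middle integral
  have hmid : |∫ x in (1/2 - r)..(1/2 + r), f x| ≤ 2 * (2 * r) := by
    have hb : ∀ x : ℝ, ‖f x‖ ≤ 2 := by
      intro x
      have := psi_abs_le k x
      have := psi_abs_le l x
      have h2 : Real.sqrt 2 * Real.sqrt 2 = 2 := Real.mul_self_sqrt (by norm_num)
      calc ‖f x‖ = |psi k x| * |psi l x| := abs_mul _ _
        _ ≤ Real.sqrt 2 * Real.sqrt 2 := by
            apply mul_le_mul (psi_abs_le k x) (psi_abs_le l x) (abs_nonneg _)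
              (Real.sqrt_nonneg 2)
        _ = 2 := h2
    have := intervalIntegral.norm_integral_le_of_norm_le_const
      (C := 2) (a := 1/2 - r) (b := 1/2 + r) (f := f) (fun x _ => hb x)
    calc |∫ x in (1/2 - r)..(1/2 + r), f x| ≤ 2 * |(1/2 + r) - (1/2 - r)| := this
      _ = 2 * (2 * r) := by rw [abs_of_nonneg (by linarith)]; ring
  -- assemble
  have hsum : (∫ x in Set.Icc (0:ℝ) (1/2 - r), f x) + (∫ x in Set.Icc (1/2 + r) (1:ℝ), f x)
      = -(∫ x in (1/2 - r)..(1/2 + r), f x) := by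
    rw [e1, e2]
    linarith [hsplit, horth]
  have hipr : ipr r (psi k) (psi l) = (1 / (1 - 2 * r)) *
      (-(∫ x in (1/2 - r)..(1/2 + r), f x)) := by
    rw [ipr, ← hsum]
  have hpos : (0:ℝ) < 1 - 2*r := by linarith
  have hcoef : (1 / (1 - 2*r)) ≤ 2 := by
    rw [div_le_iff₀ hpos]; linarith
  have hcoef0 : (0:ℝ) ≤ 1 / (1 - 2*r) := by positivity
  have habs : |ipr r (psi k) (psi l)| ≤ 8 * r := by
    rw [hipr, abs_mul, abs_neg, abs_of_nonneg hcoef0]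
    calc (1 / (1 - 2*r)) * |∫ x in (1/2 - r)..(1/2 + r), f x|
        ≤ 2 * (2 * (2 * r)) := by
          apply mul_le_mul hcoef hmid (abs_nonneg _) (by norm_num)
      _ = 8 * r := by ring
  calc (ipr r (psi k) (psi l)) ^ 2 = |ipr r (psi k) (psi l)| ^ 2 := (sq_abs _).symm
    _ ≤ (8 * r) ^ 2 := by
        apply pow_le_pow_left₀ (abs_nonneg _) habs
    _ = 64 * r ^ 2 := by ring
end

section
/- Let 0 < r < 1/2, K ≥ 1, and let x_1, …, x_n ∈ [0,1]. Let Φ ∈ ℝ^{n×K} have entries Φ_{ik} = ψ_{k−1}(x_i), let Σ̂ = (Φᵀ Φ)/n, and let Σ ∈ ℝ^{K×K} be the Gram matrix Σ_{kℓ} = ⟨ψ_{k−1}, ψ_{ℓ−1}⟩_r. Suppose Σ is positive definite with ‖I_K − Σ‖_F < 1 and Σ̂ is invertible. Then for every β ∈ ℝ^K, the function f = ∑_{k=1}^K β_k ψ_{k−1} satisfies sup_{x ∈ [0,1]} |f'(x)|² ≤ 2π² K³ · ‖Σ^{1/2} Σ̂^{−1} Σ^{1/2}‖_op / (1 − ‖I_K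 − Σ‖_F) · βᵀ Σ̂ β, where Σ^{1/2} is the positive semidefinite square root of Σ, ‖·‖_op is the operator (spectral) norm, and ‖·‖_F is the Frobenius norm. -/
open MeasureTheory Matrix

/-- The Frobenius norm of a real square matrix. -/
noncomputable def frobNorm {K : ℕ} (M : Matrix (Fin K) (Fin K) ℝ) : ℝ :=
  Real.sqrt (∑ k : Fin K, ∑ l : Fin K, (M k l) ^ 2)

/-- The ℓ²→ℓ² operator (spectral) norm of a real square matrix. -/
noncomputable def l2OpNorm {K : ℕ} (M : Matrix (Fin K) (Fin K) ℝ) : ℝ :=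
  ‖Matrix.toEuclideanCLM (𝕜 := ℝ) M‖

/-- The positive semidefinite square root of a positive semidefinite matrix, as
`Matrix.PosSemidef.sqrt` was defined in the older Mathlib (removed since). -/
noncomputable def psdSqrtOld {K : ℕ} {M : Matrix (Fin K) (Fin K) ℝ} (hA : M.PosSemidef) :
    Matrix (Fin K) (Fin K) ℝ :=
  hA.1.eigenvectorUnitary.1 * diagonal ((↑) ∘ (Real.sqrt ·) ∘ hA.1.eigenvalues) *
    (star hA.1.eigenvectorUnitary : Matrix (Fin K) (Fin K) ℝ)

/- ### Auxiliary lemmas -/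

lemma psdSqrtOld_transpose {K : ℕ} {M : Matrix (Fin K) (Fin K) ℝ} (hA : M.PosSemidef) :
    (psdSqrtOld hA)ᵀ = psdSqrtOld hA := by
  have h : (psdSqrtOld hA).IsHermitian := by
    unfold psdSqrtOld
    rw [star_eq_conjTranspose]
    exact isHermitian_mul_mul_conjTranspose _ (isHermitian_diagonal _)
  rwa [Matrix.IsHermitian, Matrix.conjTranspose_eq_transpose_of_trivial] at h

lemma psdSqrtOld_mul_self {K : ℕ} {M : Matrix (Fin K) (Fin K) ℝ} (hA : M.PosSemidef) :
    psdSqrtOld hA * psdSqrtOld hA = M := by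
  have hU : (star hA.1.eigenvectorUnitary : Matrix (Fin K) (Fin K) ℝ) *
      hA.1.eigenvectorUnitary.1 = 1 := Unitary.coe_star_mul_self _
  have hD : diagonal ((fun x : ℝ => x) ∘ (Real.sqrt ·) ∘ hA.1.eigenvalues) *
      diagonal ((fun x : ℝ => x) ∘ (Real.sqrt ·) ∘ hA.1.eigenvalues) =
      diagonal (RCLike.ofReal ∘ hA.1.eigenvalues) := by
    rw [diagonal_mul_diagonal]
    congr 1
    funext i
    simp [Real.mul_self_sqrt (hA.eigenvalues_nonneg i)]
  conv_rhs => rw [hA.1.spectral_theorem, Unitary.conjStarAlgAut_apply]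
  unfold psdSqrtOld
  calc _ = hA.1.eigenvectorUnitary.1 * (diagonal ((fun x : ℝ => x) ∘ (Real.sqrt ·) ∘ hA.1.eigenvalues) *
        ((star hA.1.eigenvectorUnitary : Matrix (Fin K) (Fin K) ℝ) *
          hA.1.eigenvectorUnitary.1) *
        diagonal ((fun x : ℝ => x) ∘ (Real.sqrt ·) ∘ hA.1.eigenvalues)) *
        (star hA.1.eigenvectorUnitary : Matrix (Fin K) (Fin K) ℝ) := by
          simp only [Matrix.mul_assoc]
    _ = _ := by rw [hU, Matrix.mul_one, hD]

lemma psi_hasDerivAt (k : ℕ) (y : ℝ) :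
    HasDerivAt (psi k)
      (-(Real.sqrt 2 * ((k : ℝ) * Real.pi) * Real.sin ((k : ℝ) * Real.pi * y))) y := by
  rcases Nat.eq_zero_or_pos k with hk | hk
  · subst hk
    simp only [psi, if_pos rfl, Nat.cast_zero, zero_mul, mul_zero, neg_zero]
    exact hasDerivAt_const y (1:ℝ)
  · have h1 : HasDerivAt (fun x : ℝ => (k:ℝ) * Real.pi * x) ((k:ℝ)*Real.pi) y := by
      simpa using (hasDerivAt_id y).const_mul ((k:ℝ)*Real.pi)
    have h2 := (h1.cos).const_mul (Real.sqrt 2)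
    simp only [psi, if_neg hk.ne']
    refine h2.congr_deriv ?_
    ring

lemma dot_symm_assoc {K : ℕ} {M : Matrix (Fin K) (Fin K) ℝ} (hM : Mᵀ = M) (x y : Fin K → ℝ) :
    x ⬝ᵥ M.mulVec y = (M.mulVec x) ⬝ᵥ y := by
  have h : x ᵥ* M = M *ᵥ x := by
    conv_lhs => rw [← hM]
    rw [vecMul_transpose]
  rw [dotProduct_mulVec, h]

lemma dot_mulVec_le_l2OpNorm {K : ℕ} (M : Matrix (Fin K) (Fin K) ℝ) (v : Fin K → ℝ) :
    v ⬝ᵥ M.mulVec v ≤ l2OpNorm M * (v ⬝ᵥ v) := by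
  set e : EuclideanSpace ℝ (Fin K) := WithLp.toLp 2 v with he
  have h1 : Matrix.toEuclideanCLM (𝕜 := ℝ) M e = WithLp.toLp 2 (M.mulVec v) :=
    Matrix.toEuclideanCLM_toLp M v
  have h2 : v ⬝ᵥ M.mulVec v = inner ℝ e (Matrix.toEuclideanCLM (𝕜:=ℝ) M e) := by
    rw [h1]
    simp [PiLp.inner_apply, dotProduct, he, mul_comm]
  have h3 : v ⬝ᵥ v = ‖e‖^2 := by
    rw [EuclideanSpace.norm_eq, Real.sq_sqrt (by positivity)]
    simp [dotProduct, he, sq]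
  calc v ⬝ᵥ M.mulVec v = inner ℝ e (Matrix.toEuclideanCLM (𝕜:=ℝ) M e) := h2
    _ ≤ ‖e‖ * ‖Matrix.toEuclideanCLM (𝕜:=ℝ) M e‖ := real_inner_le_norm _ _
    _ ≤ ‖e‖ * (‖Matrix.toEuclideanCLM (𝕜:=ℝ) M‖ * ‖e‖) :=
        mul_le_mul_of_nonneg_left ((Matrix.toEuclideanCLM (𝕜:=ℝ) M).le_opNorm e) (norm_nonneg _)
    _ = l2OpNorm M * ‖e‖^2 := by rw [l2OpNorm]; ring
    _ = l2OpNorm M * (v ⬝ᵥ v) := by rw [h3]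

lemma dot_frob {K : ℕ} (M : Matrix (Fin K) (Fin K) ℝ) (v : Fin K → ℝ) :
    v ⬝ᵥ M.mulVec v ≤ frobNorm M * (∑ i, v i ^ 2) := by
  have hv0 : (0:ℝ) ≤ ∑ i, v i ^ 2 := Finset.sum_nonneg fun i _ => sq_nonneg _
  have hM0 : (0:ℝ) ≤ ∑ k : Fin K, ∑ l : Fin K, (M k l)^2 :=
    Finset.sum_nonneg fun k _ => Finset.sum_nonneg fun l _ => sq_nonneg _
  have hMv : ∑ i, (M.mulVec v i)^2 ≤ (∑ k : Fin K, ∑ l : Fin K, (M k l)^2) * (∑ i, v i ^ 2) := by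
    rw [Finset.sum_mul]
    exact Finset.sum_le_sum fun k _ =>
      Finset.sum_mul_sq_le_sq_mul_sq Finset.univ (fun l => M k l) v
  calc v ⬝ᵥ M.mulVec v ≤ Real.sqrt (∑ i, v i ^ 2) * Real.sqrt (∑ i, (M.mulVec v i)^2) :=
        Real.sum_mul_le_sqrt_mul_sqrt _ v _
    _ ≤ Real.sqrt (∑ i, v i ^ 2) *
          Real.sqrt ((∑ k : Fin K, ∑ l : Fin K, (M k l)^2) * (∑ i, v i ^ 2)) :=
        mul_le_mul_of_nonneg_left (Real.sqrt_le_sqrt hMv) (Real.sqrt_nonneg _)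
    _ = frobNorm M * (∑ i, v i ^ 2) := by
        rw [Real.sqrt_mul hM0, frobNorm]
        rw [mul_comm (Real.sqrt _) _, mul_assoc, Real.mul_self_sqrt hv0]

set_option maxHeartbeats 1000000 in
/-- Lipschitz regularity of the conditional mean of uniform least squares.
With design points `x₁,…,xₙ ∈ [0,1]`, feature matrix `Φ_{ik} = ψ_{k-1}(xᵢ)`, empirical
covariance `Σ̂ = ΦᵀΦ/n`, and Gram matrix `Σ_{kℓ} = ⟨ψ_{k-1},ψ_{ℓ-1}⟩_r` positive definite with
`‖I_K - Σ‖_F < 1` and `Σ̂` invertible, every `f = ∑_{k=1}^K β_k ψ_{k-1}` satisfies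
`sup_{x∈[0,1]} |f'(x)|² ≤ 2π²K³ ‖Σ^{1/2} Σ̂⁻¹ Σ^{1/2}‖_op / (1 - ‖I_K - Σ‖_F) · βᵀ Σ̂ β`. -/
theorem lipschitz_regularity_uniform_least_squares
    (r : ℝ) (hr0 : 0 < r) (hr1 : r < 1 / 2)
    (K n : ℕ) (hK : 1 ≤ K) (hn : 1 ≤ n)
    (x : Fin n → ℝ) (hx : ∀ i, x i ∈ Set.Icc (0 : ℝ) 1)
    (Φ : Matrix (Fin n) (Fin K) ℝ) (hΦ : ∀ i k, Φ i k = psi (k : ℕ) (x i))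
    (Shat : Matrix (Fin K) (Fin K) ℝ) (hShat : Shat = ((n : ℝ))⁻¹ • (Φ.transpose * Φ))
    (Smat : Matrix (Fin K) (Fin K) ℝ) (hSmat : ∀ k l, Smat k l = ipr r (psi (k : ℕ)) (psi (l : ℕ)))
    (hSpd : Smat.PosDef)
    (hSF : frobNorm (1 - Smat) < 1)
    (hShatinv : IsUnit Shat.det)
    (β : Fin K → ℝ) :
    ∀ y ∈ Set.Icc (0 : ℝ) 1,
      (deriv (fun t : ℝ => ∑ k : Fin K, β k * psi (k : ℕ) t) y) ^ 2
        ≤ 2 * Real.pi ^ 2 * (K : ℝ) ^ 3 *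
            l2OpNorm (psdSqrtOld hSpd.posSemidef * Shat⁻¹ * psdSqrtOld hSpd.posSemidef) /
            (1 - frobNorm (1 - Smat)) * (β ⬝ᵥ Shat.mulVec β) := by
  intro y hy
  have hπ := Real.pi_pos
  -- Shat is positive semidefinite
  have hTpsd : Shat.PosSemidef := by
    have hpsd : (Φᴴ * Φ).PosSemidef := posSemidef_conjTranspose_mul_self Φ
    have ht : Φᵀ = Φᴴ := (Matrix.conjTranspose_eq_transpose_of_trivial Φ).symm
    rw [hShat, ht]
    exact hpsd.smul (by positivity)
  set R : Matrix (Fin K) (Fin K) ℝ := psdSqrtOld hSpd.posSemidef with hRdef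
  set B : Matrix (Fin K) (Fin K) ℝ := psdSqrtOld hTpsd with hBdef
  set N : ℝ := l2OpNorm (R * Shat⁻¹ * R) with hNdef
  set F : ℝ := frobNorm (1 - Smat) with hFdef
  set q : ℝ := β ⬝ᵥ Shat.mulVec β with hqdef
  have hN0 : 0 ≤ N := norm_nonneg _
  have hq0 : 0 ≤ q := by simpa using hTpsd.dotProduct_mulVec_nonneg β
  have hF1 : 0 < 1 - F := by linarith
  -- symmetry facts
  have hRT : Rᵀ = R := by
    exact psdSqrtOld_transpose hSpd.posSemidef
  have hBT : Bᵀ = B := by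
    exact psdSqrtOld_transpose hTpsd
  have hBiT : (B⁻¹)ᵀ = B⁻¹ := by rw [Matrix.transpose_nonsing_inv, hBT]
  have hRR : R * R = Smat := psdSqrtOld_mul_self hSpd.posSemidef
  have hBB : B * B = Shat := psdSqrtOld_mul_self hTpsd
  have hBdet : IsUnit B.det := by
    have h : B.det * B.det = Shat.det := by rw [← Matrix.det_mul, hBB]
    rw [← h] at hShatinv
    exact (IsUnit.mul_iff.mp hShatinv).1
  have hBinv : B * B⁻¹ = 1 := Matrix.mul_nonsing_inv B hBdet
  -- P = ∑ β²
  set P : ℝ := ∑ k : Fin K, (β k)^2 with hPdef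
  have hP0 : 0 ≤ P := Finset.sum_nonneg fun k _ => sq_nonneg _
  -- Step B : (1-F) * P ≤ β ⬝ᵥ Smat β
  have hdotP : β ⬝ᵥ β = P := by
    simp [dotProduct, hPdef, sq]
  have hstepB : (1 - F) * P ≤ β ⬝ᵥ Smat.mulVec β := by
    have h1 : β ⬝ᵥ ((1 : Matrix (Fin K) (Fin K) ℝ) - Smat).mulVec β ≤ F * P := by
      simpa [hFdef, hPdef] using dot_frob (1 - Smat) β
    have h2 : β ⬝ᵥ ((1 : Matrix (Fin K) (Fin K) ℝ) - Smat).mulVec β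
        = P - β ⬝ᵥ Smat.mulVec β := by
      rw [Matrix.sub_mulVec, dotProduct_sub, Matrix.one_mulVec, hdotP]
    linarith [h1, h2]
  -- Step C : β ⬝ᵥ Smat β ≤ N * q
  set w : Fin K → ℝ := R.mulVec β with hwdef
  set u : Fin K → ℝ := B.mulVec β with hudef
  set z : Fin K → ℝ := R.mulVec w with hzdef
  set c : Fin K → ℝ := B⁻¹.mulVec z with hcdef
  have hβS : β ⬝ᵥ Smat.mulVec β = w ⬝ᵥ w := by
    rw [← hRR, ← Matrix.mulVec_mulVec, dot_symm_assoc hRT]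
  have huu : u ⬝ᵥ u = q := by
    rw [hudef, ← dot_symm_assoc hBT, Matrix.mulVec_mulVec, hBB, hqdef]
  have hww_uc : w ⬝ᵥ w = u ⬝ᵥ c := by
    have : u ⬝ᵥ c = β ⬝ᵥ (B * B⁻¹).mulVec z := by
      rw [hudef, ← dot_symm_assoc hBT, Matrix.mulVec_mulVec]
    rw [this, hBinv, Matrix.one_mulVec, hzdef, dot_symm_assoc hRT]
    exact dotProduct_comm _ _
  have hcc : c ⬝ᵥ c ≤ N * (w ⬝ᵥ w) := by
    have h1 : c ⬝ᵥ c = w ⬝ᵥ (R * Shat⁻¹ * R).mulVec w := by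
      rw [hcdef, ← dot_symm_assoc hBiT, Matrix.mulVec_mulVec]
      have hBB' : B⁻¹ * B⁻¹ = Shat⁻¹ := by rw [← Matrix.mul_inv_rev, hBB]
      rw [hBB', hzdef, ← dot_symm_assoc hRT, Matrix.mulVec_mulVec, Matrix.mulVec_mulVec,
        Matrix.mul_assoc]
    rw [h1]
    exact dot_mulVec_le_l2OpNorm _ w
  have hww0 : 0 ≤ w ⬝ᵥ w := Finset.sum_nonneg fun i _ => mul_self_nonneg _
  have hCS : (u ⬝ᵥ c)^2 ≤ (u ⬝ᵥ u) * (c ⬝ᵥ c) := by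
    have := Finset.sum_mul_sq_le_sq_mul_sq Finset.univ u c
    simpa [dotProduct, sq] using this
  have hstepC : β ⬝ᵥ Smat.mulVec β ≤ N * q := by
    rw [hβS]
    rcases eq_or_lt_of_le hww0 with h0 | hpos
    · rw [← h0]; exact mul_nonneg hN0 hq0
    · have h4 : (w ⬝ᵥ w)^2 ≤ q * (N * (w ⬝ᵥ w)) := by
        calc (w ⬝ᵥ w)^2 = (u ⬝ᵥ c)^2 := by rw [hww_uc]
          _ ≤ (u ⬝ᵥ u) * (c ⬝ᵥ c) := hCS
          _ = q * (c ⬝ᵥ c) := by rw [huu]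
          _ ≤ q * (N * (w ⬝ᵥ w)) := mul_le_mul_of_nonneg_left hcc hq0
      nlinarith [h4, hpos]
  -- Step A : derivative bound
  have hder : HasDerivAt (fun t : ℝ => ∑ k : Fin K, β k * psi (k : ℕ) t)
      (∑ k : Fin K, β k *
        (-(Real.sqrt 2 * (((k : ℕ) : ℝ) * Real.pi) * Real.sin (((k : ℕ) : ℝ) * Real.pi * y)))) y :=
    HasDerivAt.fun_sum fun (k : Fin K) _ => (psi_hasDerivAt (k : ℕ) y).const_mul (β k)
  rw [hder.deriv]
  set g : Fin K → ℝ := fun k =>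
    -(Real.sqrt 2 * (((k : ℕ) : ℝ) * Real.pi) * Real.sin (((k : ℕ) : ℝ) * Real.pi * y)) with hgdef
  have hg2 : ∀ k : Fin K, (g k)^2 ≤ 2 * Real.pi^2 * (K:ℝ)^2 := by
    intro k
    have hs : Real.sin (((k : ℕ) : ℝ) * Real.pi * y)^2 ≤ 1 := Real.sin_sq_le_one _
    have hs0 : 0 ≤ Real.sin (((k : ℕ) : ℝ) * Real.pi * y)^2 := sq_nonneg _
    have hk : ((k : ℕ) : ℝ) ≤ (K : ℝ) := by exact_mod_cast le_of_lt k.2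
    have hk0 : (0:ℝ) ≤ ((k : ℕ) : ℝ) := Nat.cast_nonneg _
    have h2 : (Real.sqrt 2)^2 = 2 := Real.sq_sqrt (by norm_num)
    have hexp : (g k)^2 = 2 * (((k : ℕ) : ℝ))^2 * Real.pi^2 *
        Real.sin (((k : ℕ) : ℝ) * Real.pi * y)^2 := by
      rw [hgdef]; rw [neg_sq]
      rw [mul_pow, mul_pow, mul_pow, h2]; ring
    have hk2 : (((k : ℕ) : ℝ))^2 ≤ (K:ℝ)^2 := pow_le_pow_left₀ hk0 hk 2
    rw [hexp]
    calc 2 * (((k : ℕ) : ℝ))^2 * Real.pi^2 * Real.sin (((k : ℕ) : ℝ) * Real.pi * y)^2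
        ≤ 2 * (((k : ℕ) : ℝ))^2 * Real.pi^2 * 1 :=
          mul_le_mul_of_nonneg_left hs (by positivity)
      _ ≤ 2 * Real.pi^2 * (K:ℝ)^2 := by nlinarith [hk2, sq_nonneg Real.pi]
  have hsumg : ∑ k : Fin K, (g k)^2 ≤ 2 * Real.pi^2 * (K:ℝ)^3 := by
    calc ∑ k : Fin K, (g k)^2 ≤ ∑ _k : Fin K, 2 * Real.pi^2 * (K:ℝ)^2 :=
          Finset.sum_le_sum fun k _ => hg2 k
      _ = (K:ℝ) * (2 * Real.pi^2 * (K:ℝ)^2) := by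
          rw [Finset.sum_const, Finset.card_univ, Fintype.card_fin, nsmul_eq_mul]
      _ = 2 * Real.pi^2 * (K:ℝ)^3 := by ring
  have hstepA : (∑ k : Fin K, β k * g k)^2 ≤ P * (2 * Real.pi^2 * (K:ℝ)^3) := by
    calc (∑ k : Fin K, β k * g k)^2
        ≤ (∑ k : Fin K, (β k)^2) * (∑ k : Fin K, (g k)^2) :=
          Finset.sum_mul_sq_le_sq_mul_sq Finset.univ β g
      _ ≤ P * (2 * Real.pi^2 * (K:ℝ)^3) := mul_le_mul_of_nonneg_left hsumg hP0
  -- Combine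
  have hPle : P ≤ N * q / (1 - F) := by
    rw [le_div_iff₀ hF1]
    linarith [hstepB, hstepC]
  have hc3 : (0:ℝ) ≤ 2 * Real.pi^2 * (K:ℝ)^3 := by positivity
  calc (∑ k : Fin K, β k * g k)^2 ≤ P * (2 * Real.pi^2 * (K:ℝ)^3) := hstepA
    _ ≤ (N * q / (1 - F)) * (2 * Real.pi^2 * (K:ℝ)^3) :=
        mul_le_mul_of_nonneg_right hPle hc3
    _ = 2 * Real.pi ^ 2 * (K : ℝ) ^ 3 * N / (1 - F) * q := by ring
end
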